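/- arXiv:2405.01863 — 8 statements merged into one kernel-verified Lean document; each statement's English description precedes it below -/
import Mathlib

section
/- For every transition graph T on vertex set {1,...,n} (a directed graph specifying allowed row additions/subtractions between rows, together with row multiplications/divisions by a fixed generator α of the multiplicative group of F_q), the set ops(T) generates the group GL(n,q) if and only if T is strongly connected. -/
open Matrix Finset

/-- A graph is Hamilton connected if any two distinct vertices are joined by a Hamilton path. -/
def HamConn {V : Type*} [DecidableEq V] (G : SimpleGraph V) : Prop :=
  ∀ x y : V, x ≠ y → ∃ p : G.Walk x y, p.IsHamiltonian

/-- A bipartite graph is Hamilton laceable: there is a proper 2-coloring such that any two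
vertices of different colors are joined by a Hamilton path. -/
def HamLaceable {V : Type*} [DecidableEq V] (G : SimpleGraph V) : Prop :=
  ∃ c : V → Bool, (∀ ⦃x y⦄, G.Adj x y → c x ≠ c y) ∧
    ∀ x y : V, c x ≠ c y → ∃ p : G.Walk x y, p.IsHamiltonian

/-- The undirected Cayley graph of a group with connection set `S` (acting on the left). -/
def cayley {G : Type*} [Group G] (S : Set G) : SimpleGraph G :=
  SimpleGraph.fromRel (fun x y => ∃ s ∈ S, y = s * x)

/-- The set of row operations specified by a transition graph `E` on `[n]` together with
row multiplications/divisions by `α`: elementary matrices `A_{ij}`, `A_{ij}⁻¹` for edges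
`(i,j)` of `E`, and `M_i`, `M_i⁻¹` for all `i`. -/
def ops (n : ℕ) (F : Type*) [Field F] (E : Fin n → Fin n → Prop) (α : F) :
    Set (Matrix.GeneralLinearGroup (Fin n) F) :=
  {A | (∃ i j, E i j ∧ ((A : Matrix (Fin n) (Fin n) F) = 1 + Matrix.single j i 1 ∨
        (A : Matrix (Fin n) (Fin n) F) = 1 + Matrix.single j i (-1))) ∨
      (∃ i, (A : Matrix (Fin n) (Fin n) F) = 1 + Matrix.single i i (α - 1) ∨
        (A : Matrix (Fin n) (Fin n) F) = 1 + Matrix.single i i (α⁻¹ - 1))}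

/-- Bypass transition graphs: a single vertex, or obtained from a bypass transition graph
on `[n-1]` by adding the vertex `n` with an in-edge from some `i ∈ [n-1]` and an out-edge
to some `j ∈ [n-1]`. -/
inductive IsBypass : (n : ℕ) → (Fin n → Fin n → Prop) → Prop
  | single (E : Fin 1 → Fin 1 → Prop) : IsBypass 1 E
  | step (n : ℕ) (E : Fin (n + 1) → Fin (n + 1) → Prop)
      (hin : ∃ i : Fin n, E i.castSucc (Fin.last n))
      (hout : ∃ j : Fin n, E (Fin.last n) j.castSucc)
      (hrec : IsBypass n (fun a b => E a.castSucc b.castSucc)) :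
      IsBypass (n + 1) E

/-!
If `j` is not reachable from `i`, let `P` be the set of vertices reachable from `i`. Every
generator is block triangular with respect to the partition `P`, `Pᶜ` (no row of `P` is ever
added to a row outside `P`), and block triangular invertible matrices form a group; the
transvection adding row `i` to row `j` is not of this form.

Conversely, since `α` generates `Fˣ`, every invertible diagonal matrix is generated.
Conjugating the transvection of an edge by a diagonal matrix rescales it to any coefficient,
and the commutator `[T_jk(1), T_ki(c)] = T_ji(c)` extends transvections along paths. Invertible
diagonal matrices and transvections generate `GL n F`.
-/

namespace Matrix

variable {m R : Type*} [DecidableEq m] [CommRing R]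

theorem diagonal_mulSingle (i : m) (x : R) :
    diagonal (Pi.mulSingle i x) = 1 + single i i (x - 1) := by
  ext a b
  simp only [diagonal_apply, Pi.mulSingle_apply, add_apply, one_apply, single_apply]
  split_ifs <;> grind

variable [Fintype m]

def GeneralLinearGroup.blockTriangular {β : Type*} [LinearOrder β] (b : m → β) :
    Subgroup (GL m R) where
  carrier := {g | BlockTriangular (g : Matrix m m R) b}
  one_mem' := blockTriangular_one
  mul_mem' := BlockTriangular.mul
  inv_mem' {g} hg := by
    let := g.invertible
    simpa only [Set.mem_ofPred_eq, coe_units_inv] using blockTriangular_inv_of_blockTriangular hg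

def GeneralLinearGroup.diagonal : (m → Rˣ) →* GL m R :=
  (Units.map (diagonalRingHom m R : (m → R) →* Matrix m m R)).comp
    MulEquiv.piUnits.symm.toMonoidHom

theorem GeneralLinearGroup.coe_diagonal (d : m → Rˣ) :
    (GeneralLinearGroup.diagonal d : Matrix m m R) = Matrix.diagonal fun i => (d i : R) :=
  rfl

theorem GeneralLinearGroup.coe_diagonal_mulSingle (i : m) (u : Rˣ) :
    (GeneralLinearGroup.diagonal (Pi.mulSingle i u) : Matrix m m R) =
      Matrix.diagonal (Pi.mulSingle i (u : R)) := by
  rw [coe_diagonal]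
  congr 1
  funext a
  by_cases h : a = i <;> simp [h]

theorem isUnit_transvection {i j : m} (h : i ≠ j) (c : R) : IsUnit (transvection i j c) := by
  rw [isUnit_iff_isUnit_det, det_transvection_of_ne i j h]
  exact isUnit_one

theorem diagonal_mulSingle_mul_transvection_mul {i j : m} (h : i ≠ j) (u : Rˣ) (c : R) :
    diagonal (Pi.mulSingle i (u : R)) * transvection i j c *
        diagonal (Pi.mulSingle i ((u⁻¹ : Rˣ) : R)) = transvection i j (u * c) := by
  ext a b
  simp only [transvection, mul_add, add_mul, diagonal_mul, mul_diagonal, Pi.mulSingle_apply,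
    single_apply, one_apply, diagonal_apply, Matrix.add_apply, Matrix.mul_one]
  split_ifs <;> grind [Units.mul_inv]

theorem transvection_commutator {i j k : m} (hij : i ≠ j) (hjk : j ≠ k) (hki : k ≠ i)
    (x y : R) :
    transvection i j x * transvection j k y * transvection i j (-x) * transvection j k (-y) =
      transvection i k (x * y) := by
  have hneg (a b : m) (z : R) : single a b (-z) = -single a b z :=
    map_neg (singleAddMonoidHom a b) z
  simp [transvection, mul_add, add_mul, hki, hij.symm, hjk.symm, hneg]
  abel

end Matrix

namespace ops

open GeneralLinearGroup Relation

variable {n : ℕ} {F : Type*} [Field F] {E : Fin n → Fin n → Prop}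

theorem subset_blockTriangular {β : Type*} [LinearOrder β] {b : Fin n → β}
    (hb : ∀ i j, E i j → b j ≤ b i) (α : F) :
    ops n F E α ⊆ (blockTriangular b : Subgroup (GL (Fin n) F)) := by
  have key {i j : Fin n} (h : b j ≤ b i) (c : F) : BlockTriangular (1 + single j i c) b :=
    blockTriangular_one.add (blockTriangular_single h c)
  rintro g (⟨i, j, hij, hg | hg⟩ | ⟨i, hg | hg⟩) <;>
    change BlockTriangular (g : Matrix (Fin n) (Fin n) F) b <;> rw [hg]
  exacts [key (hb i j hij) _, key (hb i j hij) _, key le_rfl _, key le_rfl _]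

theorem reflTransGen_of_closure_eq_top {α : F} (htop : Subgroup.closure (ops n F E α) = ⊤)
    (i j : Fin n) : ReflTransGen E i j := by
  by_contra hij
  have hne : j ≠ i := by rintro rfl; exact hij .refl
  -- `Prop` is ordered by `False < True`, so the reachable vertices form the first block.
  let unreachable (x : Fin n) : Prop := ¬ReflTransGen E i x
  have hle : Subgroup.closure (ops n F E α) ≤ blockTriangular unreachable :=
    (Subgroup.closure_le _).2 <| subset_blockTriangular (fun x y hxy hy hx => hy (hx.tail hxy)) α
  have hT := hle (htop ▸ Subgroup.mem_top (isUnit_transvection hne (1 : F)).unit)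
  have hlt : unreachable i < unreachable j := lt_of_le_not_ge (fun _ => hij) (· hij .refl)
  simpa [transvection, hne] using hT hlt

variable {α : Fˣ}

theorem diagonal_mem_closure (hα : ∀ x : Fˣ, x ∈ Subgroup.zpowers α) (d : Fin n → Fˣ) :
    GeneralLinearGroup.diagonal d ∈ Subgroup.closure (ops n F E (α : F)) := by
  set H := Subgroup.closure (ops n F E (α : F))
  have hgen (i : Fin n) : GeneralLinearGroup.diagonal (Pi.mulSingle i α) ∈ H :=
    Subgroup.subset_closure <|
      Or.inr ⟨i, Or.inl <| by rw [coe_diagonal_mulSingle, diagonal_mulSingle]⟩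
  suffices d ∈ H.comap GeneralLinearGroup.diagonal from this
  rw [← Finset.univ_prod_mulSingle d]
  refine Subgroup.prod_mem _ fun i _ => ?_
  obtain ⟨k, hk⟩ := Subgroup.mem_zpowers_iff.1 (hα (d i))
  rw [← hk, Pi.mulSingle_zpow]
  exact zpow_mem (Subgroup.mem_comap.2 (hgen i)) k

theorem transvection_mem_of_edge (hα : ∀ x : Fˣ, x ∈ Subgroup.zpowers α) {i j : Fin n}
    (hij : E i j) (hne : j ≠ i) (c : F) :
    transvection j i c ∈ (Subgroup.closure (ops n F E (α : F))).ofUnits := by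
  set H := Subgroup.closure (ops n F E (α : F))
  rcases eq_or_ne c 0 with rfl | hc
  · rw [transvection_zero]; exact one_mem _
  have hone : transvection j i (1 : F) ∈ H.ofUnits :=
    (H.mem_ofUnits_iff_exists_isUnit _).2
      ⟨isUnit_transvection hne 1, Subgroup.subset_closure (Or.inl ⟨i, j, hij, Or.inl rfl⟩)⟩
  have hdiag (u : Fˣ) : diagonal (Pi.mulSingle j (u : F)) ∈ H.ofUnits :=
    H.mem_ofUnits (diagonal_mem_closure hα _) (coe_diagonal_mulSingle j u)
  rw [← mul_one c, ← Units.val_mk0 hc, ← diagonal_mulSingle_mul_transvection_mul hne]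
  exact mul_mem (mul_mem (hdiag _) hone) (hdiag _)

theorem transvection_mem_of_reflTransGen (hα : ∀ x : Fˣ, x ∈ Subgroup.zpowers α)
    {i j : Fin n} (hij : ReflTransGen E i j) (hne : j ≠ i) (c : F) :
    transvection j i c ∈ (Subgroup.closure (ops n F E (α : F))).ofUnits := by
  induction hij generalizing c with
  | refl => exact (hne rfl).elim
  | @tail k j _ hkj ih =>
    by_cases hjk : j = k
    · subst hjk; exact ih hne c
    by_cases hki : k = i
    · subst hki; exact transvection_mem_of_edge hα hkj hne c
    rw [← one_mul c, ← transvection_commutator hjk hki hne.symm]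
    exact mul_mem (mul_mem (mul_mem (transvection_mem_of_edge hα hkj hjk 1) (ih hki c))
      (transvection_mem_of_edge hα hkj hjk (-1))) (ih hki (-c))

theorem closure_eq_top (hα : ∀ x : Fˣ, x ∈ Subgroup.zpowers α)
    (hE : ∀ i j, ReflTransGen E i j) : Subgroup.closure (ops n F E (α : F)) = ⊤ := by
  refine eq_top_iff.2 fun g _ => Subgroup.mem_of_mem_val_ofUnits _ ?_
  refine diagonal_transvection_induction_of_det_ne_zero (· ∈ _) (g : Matrix (Fin n) (Fin n) F)
    ((isUnit_iff_isUnit_det _).1 g.isUnit).ne_zero (fun D hD => ?_)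
    (fun t => transvection_mem_of_reflTransGen hα (hE t.j t.i) t.hij t.c)
    (fun _ _ _ _ => mul_mem)
  have hD' : ∀ i, D i ≠ 0 := by simpa [det_diagonal, Finset.prod_ne_zero_iff] using hD
  exact Subgroup.mem_ofUnits _ (diagonal_mem_closure hα fun i => Units.mk0 (D i) (hD' i)) rfl

end ops

theorem ops_generates_iff_strongly_connected_general
    (n : ℕ) (F : Type) [Field F]
    (α : Fˣ) (hα : ∀ x : Fˣ, x ∈ Subgroup.zpowers α)
    (E : Fin n → Fin n → Prop) :
    Subgroup.closure (ops n F E (α : F)) = ⊤ ↔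
      ∀ i j : Fin n, Relation.ReflTransGen E i j :=
  ⟨ops.reflTransGen_of_closure_eq_top, ops.closure_eq_top hα⟩

/-- `ops(T)` generates `GL(n,q)` if and only if the transition graph `T`
is strongly connected. -/
theorem ops_generates_iff_strongly_connected
    (n q : ℕ) (hn : 1 ≤ n) (F : Type) [Field F] [Fintype F] (hq : Fintype.card F = q)
    (α : Fˣ) (hα : ∀ x : Fˣ, x ∈ Subgroup.zpowers α)
    (E : Fin n → Fin n → Prop) (hE : ∀ i : Fin n, ¬ E i i) :
    Subgroup.closure (ops n F E (α : F)) = ⊤ ↔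
      ∀ i j : Fin n, Relation.ReflTransGen E i j :=
  ops_generates_iff_strongly_connected_general n F α hα E
end

section
/- For any i ≥ 2 and j ≥ 2, the Cartesian product P_i □ C_{2j} of a path on i vertices and an even cycle on 2j vertices is Hamilton laceable. -/
open Matrix Finset

/-!
Induction on the number `m ≥ 2` of rows of the cylinder `P_m □ C_n` (`n` even), with Hamilton
paths written as lists of vertices of `ℕ × ℕ`. For two rows, a zigzag through the first `k`
columns followed by a loop around the remaining columns joins `(0, 0)` to every vertex of the
other colour; rotating the columns and swapping the rows moves `(0, 0)` anywhere.

To add a row `m` on top of a Hamilton path of the first `m` rows: a vertex of row `m - 1` that is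
not an endpoint has two path neighbours, at most one of which lies below it, so the path uses an
edge of row `m - 1`; replacing that edge by a detour once around row `m` covers the new row. If
one endpoint `(m, c)` lies in the new row, take a path of the old rows ending at `(m - 1, c + 1)`
and continue once around row `m` backwards to `(m, c)`; if both endpoints lie in the new row,
reflect the cylinder so that they lie in row `0`.
-/

open SimpleGraph

theorem List.exists_eq_append_cons_cons_cons_of_mem {α : Type*} {l : List α} {w : α}
    (hw : w ∈ l) (hhead : l.head? ≠ some w) (hlast : l.getLast? ≠ some w) :
    ∃ l₁ x y l₂, l = l₁ ++ x :: w :: y :: l₂ := by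
  obtain ⟨s, t, rfl⟩ := List.append_of_mem hw
  rcases s.eq_nil_or_concat with rfl | ⟨s, x, rfl⟩
  · simp at hhead
  rcases t with _ | ⟨y, t⟩
  · simp at hlast
  exact ⟨s, x, y, t, by simp⟩

section HamList

variable {α β : Type*} [DecidableEq α] {R : α → α → Prop}
  {S T : Finset α} {u v x y : α} {l l' : List α}

structure IsHamList (R : α → α → Prop) (S : Finset α) (u v : α) (l : List α) : Prop where
  isChain : l.IsChain R
  nodup : l.Nodup
  toFinset_eq : l.toFinset = S
  head?_eq : l.head? = some u
  getLast?_eq : l.getLast? = some v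

theorem isHamList_map_range {f : ℕ → α} {N : ℕ} (hN : 0 < N)
    (hR : ∀ t, t + 1 < N → R (f t) (f (t + 1)))
    (hf : ∀ s < N, ∀ t < N, f s = f t → s = t)
    (hS : ∀ t < N, f t ∈ S) (hcard : S.card ≤ N) :
    IsHamList R S (f 0) (f (N - 1)) ((List.range N).map f) := by
  obtain ⟨N, rfl⟩ : ∃ M, N = M + 1 := ⟨N - 1, by omega⟩
  have hnodup : ((List.range (N + 1)).map f).Nodup :=
    List.nodup_range.map_on fun s hs t ht => hf s (List.mem_range.mp hs) t (List.mem_range.mp ht)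
  refine ⟨?_, hnodup, ?_, ?_, ?_⟩
  · rw [List.isChain_map, List.isChain_range_succ]
    exact fun t ht => hR t (by omega)
  · refine Finset.eq_of_subset_of_card_le (fun a ha => ?_) ?_
    · obtain ⟨t, ht, rfl⟩ := List.mem_map.mp (List.mem_toFinset.mp ha)
      exact hS t (List.mem_range.mp ht)
    · rwa [List.toFinset_card_of_nodup hnodup, List.length_map, List.length_range]
  · simp [List.head?_range]
  · simp [List.getLast?_range]

namespace IsHamList

theorem mem_iff (h : IsHamList R S u v l) : x ∈ l ↔ x ∈ S := by
  rw [← h.toFinset_eq, List.mem_toFinset]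

theorem reverse (h : IsHamList R S u v l) (hR : ∀ a b, R a b → R b a) :
    IsHamList R S v u l.reverse where
  isChain := List.isChain_reverse.mpr (h.isChain.imp hR)
  nodup := List.nodup_reverse.mpr h.nodup
  toFinset_eq := by rw [List.toFinset_reverse, h.toFinset_eq]
  head?_eq := by rw [List.head?_reverse, h.getLast?_eq]
  getLast?_eq := by rw [List.getLast?_reverse, h.head?_eq]

theorem map [DecidableEq β] {R' : β → β → Prop} {T : Finset β} {f : α → β}
    (h : IsHamList R S u v l) (hf : Set.BijOn f S T)
    (hR : ∀ a ∈ S, ∀ b ∈ S, R a b → R' (f a) (f b)) :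
    IsHamList R' T (f u) (f v) (l.map f) where
  isChain := (List.isChain_map f).mpr <|
    h.isChain.imp_of_mem_imp fun a b ha hb => hR a (h.mem_iff.mp ha) b (h.mem_iff.mp hb)
  nodup := h.nodup.map_on fun a ha b hb => hf.injOn (h.mem_iff.mp ha) (h.mem_iff.mp hb)
  toFinset_eq := by
    rw [← Finset.coe_inj, ← hf.image_eq, ← h.toFinset_eq]
    ext; simp
  head?_eq := by rw [List.head?_map, h.head?_eq, Option.map_some]
  getLast?_eq := by rw [List.getLast?_map, h.getLast?_eq, Option.map_some]

theorem append (h : IsHamList R S u v l) (h' : IsHamList R T x y l') (hST : Disjoint S T)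
    (hvx : R v x) : IsHamList R (S ∪ T) u y (l ++ l') where
  isChain := h.isChain.append h'.isChain (by simp [h.getLast?_eq, h'.head?_eq, hvx])
  nodup := List.nodup_append.mpr ⟨h.nodup, h'.nodup, fun a ha b hb hab =>
    Finset.disjoint_left.mp hST (h.mem_iff.mp ha) (h'.mem_iff.mp (hab ▸ hb))⟩
  toFinset_eq := by rw [List.toFinset_append, h.toFinset_eq, h'.toFinset_eq]
  head?_eq := by simp [List.head?_append, h.head?_eq]
  getLast?_eq := by simp [List.getLast?_append, h'.getLast?_eq]

theorem splice {l₁ l₂ m : List α} {x' y' : α} (h : IsHamList R S u v (l₁ ++ x :: y :: l₂))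
    (hm : IsHamList R T x' y' m) (hST : Disjoint S T) (hx : R x x') (hy : R y' y) :
    IsHamList R (S ∪ T) u v (l₁ ++ x :: (m ++ y :: l₂)) := by
  have hperm : (l₁ ++ x :: (m ++ y :: l₂)).Perm ((l₁ ++ x :: y :: l₂) ++ m) := by
    simpa using (List.perm_append_comm (l₁ := m) (l₂ := y :: l₂)).append_left (l₁ ++ [x])
  obtain ⟨hc₁, -, hc₂⟩ := List.isChain_append_cons_cons.mp h.isChain
  have hlast := h.getLast?_eq
  rw [List.getLast?_append_cons, List.getLast?_cons_cons] at hlast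
  refine ⟨?_, ?_, ?_, ?_, ?_⟩
  · rw [show l₁ ++ x :: (m ++ y :: l₂) = (l₁ ++ [x]) ++ (m ++ y :: l₂) by simp]
    exact hc₁.append (hm.isChain.append hc₂ (by simp [hm.getLast?_eq, hy]))
      (by simp [List.head?_append, hm.head?_eq, hx])
  · rw [hperm.nodup_iff, List.nodup_append]
    exact ⟨h.nodup, hm.nodup, fun a ha b hb hab =>
      Finset.disjoint_left.mp hST (h.mem_iff.mp ha) (hm.mem_iff.mp (hab ▸ hb))⟩
  · rw [List.toFinset_eq_of_perm _ _ hperm, List.toFinset_append, h.toFinset_eq, hm.toFinset_eq]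
  · simpa [List.head?_append] using h.head?_eq
  · rw [List.getLast?_append_cons, ← List.cons_append, List.getLast?_append_cons, hlast]

end IsHamList

theorem exists_isHamiltonian_of_isHamList {V : Type*} [Fintype V] [DecidableEq V]
    {G : SimpleGraph V} {u v : V} {l : List V} (h : IsHamList G.Adj Finset.univ u v l) :
    ∃ p : G.Walk u v, p.IsHamiltonian := by
  have hne : l ≠ [] := by
    rintro rfl
    simpa using h.head?_eq
  have hu : l.head hne = u := by simpa [List.head?_eq_some_head hne] using h.head?_eq
  have hv : l.getLast hne = v := by simpa [List.getLast?_eq_some_getLast hne] using h.getLast?_eq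
  let p := (Walk.ofSupport l hne h.isChain).copy hu hv
  have hsupp : p.support = l := by simp [p]
  have hpath : p.IsPath := (Walk.isPath_def p).mpr (hsupp ▸ h.nodup)
  exact ⟨p, hpath.isHamiltonian_iff.mpr fun w => hsupp ▸ h.mem_iff.mpr (Finset.mem_univ w)⟩

end HamList

namespace Cylinder

def CycAdj (n a b : ℕ) : Prop :=
  b = a + 1 ∨ a = b + 1 ∨ (a = 0 ∧ b = n - 1) ∨ (b = 0 ∧ a = n - 1)

/-- Adjacency in `P_m □ C_n` with vertices `(row, column)` encoded in `ℕ × ℕ`. -/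
def CylAdj (n : ℕ) (p q : ℕ × ℕ) : Prop :=
  (p.1 = q.1 ∧ CycAdj n p.2 q.2) ∨ (p.2 = q.2 ∧ (p.1 = q.1 + 1 ∨ q.1 = p.1 + 1))

def grid (m n : ℕ) : Finset (ℕ × ℕ) := Finset.range m ×ˢ Finset.range n

def row (r n : ℕ) : Finset (ℕ × ℕ) := {r} ×ˢ Finset.range n

/-- `(a + b) % n` for `a, b < n`, in a form `omega` understands. -/
def addCyc (n a b : ℕ) : ℕ := if a + b < n then a + b else a + b - n

def flipRow (m : ℕ) (p : ℕ × ℕ) : ℕ × ℕ := (m - 1 - p.1, p.2)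

def rotCol (n k : ℕ) (p : ℕ × ℕ) : ℕ × ℕ := (p.1, addCyc n p.2 k)

def GridLaceable (m n : ℕ) : Prop :=
  ∀ u ∈ grid m n, ∀ v ∈ grid m n, (u.1 + u.2) % 2 ≠ (v.1 + v.2) % 2 →
    ∃ l, IsHamList (CylAdj n) (grid m n) u v l

variable {m n : ℕ} {u v : ℕ × ℕ} {l : List (ℕ × ℕ)}

@[simp]
theorem mem_grid {p : ℕ × ℕ} : p ∈ grid m n ↔ p.1 < m ∧ p.2 < n := by
  simp only [grid, Finset.mem_product, Finset.mem_range]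

@[simp]
theorem mem_row {r : ℕ} {p : ℕ × ℕ} : p ∈ row r n ↔ p.1 = r ∧ p.2 < n := by
  simp only [row, Finset.mem_product, Finset.mem_singleton, Finset.mem_range]

theorem grid_succ : grid (m + 1) n = grid m n ∪ row m n := by
  ext p; simp only [mem_grid, mem_row, Finset.mem_union]; omega

theorem disjoint_grid_row : Disjoint (grid m n) (row m n) :=
  Finset.disjoint_left.mpr fun p hp hp' => by simp only [mem_grid, mem_row] at hp hp'; omega

theorem cylAdj_symm (p q : ℕ × ℕ) (h : CylAdj n p q) : CylAdj n q p := by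
  unfold CylAdj CycAdj at *; omega

theorem parity_ne_of_cylAdj (hn : Even n) (hn0 : 0 < n) {p q : ℕ × ℕ} (h : CylAdj n p q) :
    (p.1 + p.2) % 2 ≠ (q.1 + q.2) % 2 := by
  have := Nat.even_iff.mp hn
  unfold CylAdj CycAdj at h; omega

theorem flipRow_flipRow {p : ℕ × ℕ} (hp : p.1 < m) : flipRow m (flipRow m p) = p := by
  ext <;> simp only [flipRow]; omega

theorem _root_.IsHamList.flipRow (h : IsHamList (CylAdj n) (grid m n) u v l) :
    IsHamList (CylAdj n) (grid m n) (Cylinder.flipRow m u) (Cylinder.flipRow m v)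
      (l.map (Cylinder.flipRow m)) := by
  have hmaps : Set.MapsTo (Cylinder.flipRow m) ↑(grid m n) ↑(grid m n) := fun p hp => by
    simp only [Finset.mem_coe, mem_grid, Cylinder.flipRow] at hp ⊢; omega
  refine h.map ((grid m n).finite_toSet.injOn_iff_bijOn_of_mapsTo hmaps |>.mp ?_) ?_
  · intro p hp q hq hpq
    simp only [Finset.mem_coe, mem_grid, Cylinder.flipRow, Prod.ext_iff] at hp hq hpq ⊢; omega
  · intro p hp q hq hpq
    simp only [mem_grid] at hp hq
    unfold CylAdj CycAdj Cylinder.flipRow at *; omega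

theorem _root_.IsHamList.rotCol {k : ℕ} (hk : k < n)
    (h : IsHamList (CylAdj n) (grid m n) u v l) :
    IsHamList (CylAdj n) (grid m n) (Cylinder.rotCol n k u) (Cylinder.rotCol n k v)
      (l.map (Cylinder.rotCol n k)) := by
  have hmaps : Set.MapsTo (Cylinder.rotCol n k) ↑(grid m n) ↑(grid m n) := fun p hp => by
    simp only [Finset.mem_coe, mem_grid, Cylinder.rotCol, addCyc] at hp ⊢; split_ifs <;> omega
  refine h.map ((grid m n).finite_toSet.injOn_iff_bijOn_of_mapsTo hmaps |>.mp ?_) ?_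
  · intro p hp q hq hpq
    simp only [Finset.mem_coe, mem_grid, Cylinder.rotCol, addCyc, Prod.ext_iff] at hp hq hpq ⊢
    split_ifs at hpq <;> omega
  · intro p hp q hq hpq
    simp only [mem_grid] at hp hq
    unfold CylAdj CycAdj Cylinder.rotCol addCyc at *; split_ifs <;> omega

theorem exists_isHamList_row {r a b : ℕ} (ha : a < n) (hb : b < n) (hab : CycAdj n a b) :
    ∃ l, IsHamList (CylAdj n) (row r n) (r, a) (r, b) l := by
  have arc : ∀ c < n, IsHamList (CylAdj n) (row r n) (r, c) (r, addCyc n c (n - 1))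
      ((List.range n).map fun t => (r, addCyc n c t)) := fun c hc => by
    convert isHamList_map_range (R := CylAdj n) (S := row r n)
      (f := fun t => (r, addCyc n c t)) (N := n) (by omega) ?_ ?_ ?_ ?_ using 2
    · simp [addCyc, hc]
    · intro t ht; unfold CylAdj CycAdj addCyc; split_ifs <;> omega
    · intro s hs t ht hst; simp only [addCyc, Prod.ext_iff] at hst; split_ifs at hst <;> omega
    · intro t ht; refine mem_row.mpr ⟨rfl, ?_⟩; unfold addCyc; split_ifs <;> omega
    · simp [row]
  unfold CycAdj at hab
  by_cases hdown : a = b + 1 ∨ (a = 0 ∧ b = n - 1)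
  · have hend : addCyc n a (n - 1) = b := by unfold addCyc; split_ifs <;> omega
    exact ⟨_, hend ▸ arc a ha⟩
  · have hend : addCyc n b (n - 1) = a := by unfold addCyc; split_ifs <;> omega
    exact ⟨_, hend ▸ (arc b hb).reverse cylAdj_symm⟩

/-- Zigzag through the first `k` columns of `P_2 □ C_n`, then along the row where the zigzag
stops up to column `n - 1`, and back along the other row down to column `k`. -/
def ladder (n k t : ℕ) : ℕ × ℕ :=
  if t < 2 * k then (if t % 4 = 1 ∨ t % 4 = 2 then 1 else 0, t / 2)
  else if t < k + n then (k % 2, t - k)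
  else (1 - k % 2, 2 * n + k - 1 - t)

theorem isHamList_ladder {k : ℕ} (hk : k < n) :
    IsHamList (CylAdj n) (grid 2 n) (0, 0) (1 - k % 2, k)
      ((List.range (2 * n)).map (ladder n k)) := by
  have hfirst : ladder n k 0 = (0, 0) := by
    unfold ladder; split_ifs <;> simp_all
  have hlast : ladder n k (2 * n - 1) = (1 - k % 2, k) := by
    unfold ladder; split_ifs <;> simp_all <;> omega
  rw [← hfirst, ← hlast]
  refine isHamList_map_range (by omega) ?_ ?_ ?_ (by simp [grid])
  · intro t ht; unfold ladder CylAdj CycAdj; split_ifs <;> omega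
  · intro s hs t ht hst
    unfold ladder at hst; split_ifs at hst <;> simp only [Prod.ext_iff] at hst <;> omega
  · intro t ht; rw [mem_grid]; unfold ladder; split_ifs <;> omega

theorem gridLaceable_two (hn : Even n) : GridLaceable 2 n := by
  have hn2 := Nat.even_iff.mp hn
  have from_row_zero : ∀ c < n, ∀ v ∈ grid 2 n, c % 2 ≠ (v.1 + v.2) % 2 →
      ∃ l, IsHamList (CylAdj n) (grid 2 n) (0, c) v l := by
    intro c hc v hv hcv
    rw [mem_grid] at hv
    set k := addCyc n v.2 (n - c) with hk_def
    have hk : k < n := by rw [hk_def]; unfold addCyc; split_ifs <;> omega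
    have hstart : rotCol n c (0, 0) = (0, c) := by simp [rotCol, addCyc, hc]
    have hend : rotCol n c (1 - k % 2, k) = v := by
      rw [hk_def]; unfold rotCol addCyc; ext <;> dsimp only <;> split_ifs <;> omega
    exact ⟨_, hstart ▸ hend ▸ (isHamList_ladder hk).rotCol hc⟩
  rintro ⟨r, c⟩ hu v hv huv
  rw [mem_grid] at hu
  obtain rfl | rfl : r = 0 ∨ r = 1 := by omega
  · exact from_row_zero c hu.2 v hv (by simpa using huv)
  · have hv' : flipRow 2 v ∈ grid 2 n := by simp only [mem_grid, flipRow] at hv ⊢; omega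
    obtain ⟨l, hl⟩ := from_row_zero c hu.2 (flipRow 2 v) hv' (by
      simp only [mem_grid, flipRow] at hv huv ⊢; omega)
    exact ⟨_, flipRow_flipRow (mem_grid.mp hv).1 ▸ hl.flipRow⟩

theorem _root_.IsHamList.exists_top_row_edge (h : IsHamList (CylAdj n) (grid m n) u v l)
    (hm : 0 < m) (hn : 3 ≤ n) :
    ∃ l₁ p q l₂, l = l₁ ++ p :: q :: l₂ ∧ p.1 = m - 1 ∧ q.1 = m - 1 ∧ p.2 < n ∧ q.2 < n ∧
      CycAdj n p.2 q.2 := by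
  obtain ⟨c, hc, hcu, hcv⟩ : ∃ c < 3, c ≠ u.2 ∧ c ≠ v.2 := by
    by_contra! H
    have := H 0; have := H 1; have := H 2; omega
  have hw : (m - 1, c) ∈ l := h.mem_iff.mpr (mem_grid.mpr ⟨by omega, by omega⟩)
  obtain ⟨l₁, x, y, l₂, rfl⟩ := List.exists_eq_append_cons_cons_cons_of_mem hw
    (by rw [h.head?_eq]; rintro ⟨⟩; exact hcu rfl)
    (by rw [h.getLast?_eq]; rintro ⟨⟩; exact hcv rfl)
  have hx := mem_grid.mp (h.mem_iff.mp (by simp : x ∈ l₁ ++ x :: (m - 1, c) :: y :: l₂))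
  have hy := mem_grid.mp (h.mem_iff.mp (by simp : y ∈ l₁ ++ x :: (m - 1, c) :: y :: l₂))
  obtain ⟨-, hxw, hwy⟩ := List.isChain_append_cons_cons.mp h.isChain
  replace hwy := (List.isChain_cons_cons.mp hwy).1
  have hxy : x ≠ y := by
    have := (List.nodup_append.mp h.nodup).2.1
    simp only [List.nodup_cons, List.mem_cons, not_or] at this
    exact this.1.2.1
  unfold CylAdj at hxw hwy
  by_cases hxrow : x.1 = m - 1
  · exact ⟨l₁, x, (m - 1, c), y :: l₂, rfl, hxrow, rfl, hx.2, by omega,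
      by dsimp only at hxw ⊢; unfold CycAdj at *; omega⟩
  by_cases hyrow : y.1 = m - 1
  · exact ⟨l₁ ++ [x], (m - 1, c), y, l₂, by simp, rfl, hyrow, by omega, hy.2,
      by dsimp only at hwy ⊢; unfold CycAdj at *; omega⟩
  -- otherwise `x` and `y` would both be the vertex below `(m - 1, c)`
  exact absurd (Prod.ext (by omega) (by omega)) hxy

theorem _root_.IsHamList.exists_grid_succ (h : IsHamList (CylAdj n) (grid m n) u v l)
    (hm : 0 < m) (hn : 3 ≤ n) : ∃ l', IsHamList (CylAdj n) (grid (m + 1) n) u v l' := by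
  obtain ⟨l₁, p, q, l₂, rfl, hp, hq, hp2, hq2, hpq⟩ := h.exists_top_row_edge hm hn
  obtain ⟨r, hr⟩ := exists_isHamList_row (r := m) hp2 hq2 hpq
  rw [grid_succ]
  exact ⟨_, h.splice hr disjoint_grid_row (by unfold CylAdj; omega) (by unfold CylAdj; omega)⟩

theorem GridLaceable.exists_of_mem_row (h : GridLaceable m n) (hn : Even n) (hm : 0 < m)
    (hu : u ∈ grid m n) (hv : v ∈ row m n) (huv : (u.1 + u.2) % 2 ≠ (v.1 + v.2) % 2) :
    ∃ l, IsHamList (CylAdj n) (grid (m + 1) n) u v l := by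
  have hn2 := Nat.even_iff.mp hn
  obtain ⟨r, c⟩ := v
  obtain ⟨hr, hc⟩ : r = m ∧ c < n := mem_row.mp hv
  subst r
  obtain ⟨l, hl⟩ := h u hu (m - 1, addCyc n c 1)
    (mem_grid.mpr ⟨by omega, by unfold addCyc; split_ifs <;> omega⟩)
    (by unfold addCyc; split_ifs <;> (dsimp only at huv ⊢; omega))
  obtain ⟨a, ha⟩ := exists_isHamList_row (r := m) (n := n) (a := addCyc n c 1) (b := c)
    (by unfold addCyc; split_ifs <;> omega) hc (by unfold CycAdj addCyc; split_ifs <;> omega)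
  rw [grid_succ]
  exact ⟨_, hl.append ha disjoint_grid_row (by unfold CylAdj; dsimp only; omega)⟩

theorem GridLaceable.succ (h : GridLaceable m n) (hn : Even n) (hn3 : 3 ≤ n) (hm : 0 < m) :
    GridLaceable (m + 1) n := by
  have old : ∀ u ∈ grid m n, ∀ v ∈ grid m n, (u.1 + u.2) % 2 ≠ (v.1 + v.2) % 2 →
      ∃ l, IsHamList (CylAdj n) (grid (m + 1) n) u v l := fun u hu v hv huv =>
    (h u hu v hv huv).elim fun _ hl => hl.exists_grid_succ hm hn3
  intro u hu v hv huv
  rw [grid_succ, Finset.mem_union] at hu hv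
  rcases hu with hu | hu <;> rcases hv with hv | hv
  · exact old u hu v hv huv
  · exact h.exists_of_mem_row hn hm hu hv huv
  · obtain ⟨l, hl⟩ := h.exists_of_mem_row hn hm hv hu huv.symm
    exact ⟨_, hl.reverse cylAdj_symm⟩
  · rw [mem_row] at hu hv
    obtain ⟨l, hl⟩ := old (flipRow (m + 1) u) (by simp only [mem_grid, flipRow]; omega)
      (flipRow (m + 1) v) (by simp only [mem_grid, flipRow]; omega)
      (by simp only [flipRow]; omega)
    exact ⟨_, flipRow_flipRow (by omega : u.1 < m + 1) ▸
      flipRow_flipRow (by omega : v.1 < m + 1) ▸ hl.flipRow⟩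

theorem gridLaceable (hn : Even n) (hn3 : 3 ≤ n) (hm : 2 ≤ m) : GridLaceable m n := by
  induction m, hm using Nat.le_induction with
  | base => exact gridLaceable_two hn
  | succ m hm ih => exact ih.succ hn hn3 (by omega)

theorem cycleGraph_adj_iff_cycAdj (hn : 2 ≤ n) {a b : Fin n} :
    (cycleGraph n).Adj a b ↔ CycAdj n a b := by
  have sub_eq_one : ∀ a b : Fin n,
      (a - b).val = 1 ↔ a.val = b.val + 1 ∨ (a.val = 0 ∧ b.val = n - 1) := by
    intro a b
    rcases le_or_gt b a with hba | hab
    · rw [Fin.coe_sub_iff_le.mpr hba]; omega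
    · rw [Fin.coe_sub_iff_lt.mpr hab]; omega
  rw [cycleGraph_adj', sub_eq_one, sub_eq_one, CycAdj]
  omega

theorem boxProd_adj_iff_cylAdj (hn : 2 ≤ n) {p q : Fin m × Fin n} :
    ((pathGraph m).boxProd (cycleGraph n)).Adj p q ↔
      CylAdj n (p.1.val, p.2.val) (q.1.val, q.2.val) := by
  rw [boxProd_adj, pathGraph_adj, cycleGraph_adj_iff_cycAdj hn, CylAdj]
  simp only [Fin.ext_iff]
  unfold CycAdj
  omega

theorem exists_isHamiltonian_of_isHamList_grid (hn : 2 ≤ n) {u v : Fin m × Fin n}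
    (h : IsHamList (CylAdj n) (grid m n) (u.1, u.2) (v.1, v.2) l) :
    ∃ p : ((pathGraph m).boxProd (cycleGraph n)).Walk u v, p.IsHamiltonian := by
  let toFin : ℕ × ℕ → Fin m × Fin n := fun p =>
    (⟨p.1 % m, Nat.mod_lt _ u.1.pos⟩, ⟨p.2 % n, Nat.mod_lt _ u.2.pos⟩)
  have toFin_val : ∀ x : Fin m × Fin n, toFin (x.1, x.2) = x := fun x => by
    ext <;> simp [toFin, Nat.mod_eq_of_lt]
  have hbij : Set.BijOn toFin (grid m n) (Finset.univ : Finset (Fin m × Fin n)) := by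
    refine ⟨fun _ _ => by simp, fun p hp q hq hpq => ?_,
      fun x _ => ⟨(x.1, x.2), by simp, toFin_val x⟩⟩
    simp only [Finset.mem_coe, mem_grid] at hp hq
    simp only [toFin, Prod.ext_iff, Fin.ext_iff, Nat.mod_eq_of_lt hp.1, Nat.mod_eq_of_lt hp.2,
      Nat.mod_eq_of_lt hq.1, Nat.mod_eq_of_lt hq.2] at hpq
    exact Prod.ext hpq.1 hpq.2
  have hadj : ∀ p ∈ grid m n, ∀ q ∈ grid m n, CylAdj n p q →
      ((pathGraph m).boxProd (cycleGraph n)).Adj (toFin p) (toFin q) := by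
    intro p hp q hq hpq
    rw [mem_grid] at hp hq
    rw [boxProd_adj_iff_cylAdj hn]
    simpa [toFin, Nat.mod_eq_of_lt hp.1, Nat.mod_eq_of_lt hp.2, Nat.mod_eq_of_lt hq.1,
      Nat.mod_eq_of_lt hq.2] using hpq
  exact exists_isHamiltonian_of_isHamList (toFin_val u ▸ toFin_val v ▸ h.map hbij hadj)

end Cylinder

/-- `P_i □ C_{2j}` is Hamilton laceable for `i, j ≥ 2`. -/
theorem path_cycle_product_laceable (i j : ℕ) (hi : 2 ≤ i) (hj : 2 ≤ j) :
    HamLaceable ((SimpleGraph.pathGraph i).boxProd (SimpleGraph.cycleGraph (2 * j))) := by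
  have hn : Even (2 * j) := even_two_mul j
  refine ⟨fun x => decide ((x.1.val + x.2.val) % 2 = 1), fun x y hxy => ?_, fun x y hxy => ?_⟩
  · have := Cylinder.parity_ne_of_cylAdj hn (by omega)
      ((Cylinder.boxProd_adj_iff_cylAdj (by omega)).mp hxy)
    simp only [ne_eq, decide_eq_decide]
    omega
  · obtain ⟨l, hl⟩ := Cylinder.gridLaceable hn (by omega) hi (x.1, x.2) (by simp) (y.1, y.2)
      (by simp) (by simp only [ne_eq, decide_eq_decide] at hxy; omega)
    exact Cylinder.exists_isHamiltonian_of_isHamList_grid (by omega) hl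
end

section
/- If G is a Hamilton connected graph on at least 3 vertices, then G □ C_k is Hamilton connected for every k ≥ 1. -/
open Matrix Finset

/-!
`G □ C_k` contains `G □ P_k` as a spanning subgraph, with the layers rotated so that any given
layer comes first; so it suffices to join each vertex `(x, 0)` of the bottom layer of `G □ P_k`
to every other vertex by a Hamilton path. This goes by induction on `k`, peeling off layer `0`.
To reach `(y, j + 1)`, run through layer `0` along a Hamilton path of `G` from `x` to a third
vertex `e ∉ {x, y}`, step up to `(e, 1)` and continue inductively. To reach `(y, 0)`, take a
Hamilton path `x w ⋯ y` of `G`: step up to `(x, 1)`, cover the upper layers inductively ending at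
`(w, 1)`, step down to `(w, 0)` and finish along `w ⋯ y` in layer `0`.
-/

namespace SimpleGraph

variable {V : Type*} {G : SimpleGraph V}

theorem Walk.IsPath.isHamiltonian_append_cons [DecidableEq V] {u v w x : V} {p : G.Walk u v}
    {q : G.Walk w x} (h : G.Adj v w) (hp : p.IsPath) (hq : q.IsPath)
    (hpq : p.support.Disjoint q.support) (hcover : ∀ z, z ∈ p.support ∨ z ∈ q.support) :
    (p.append (Walk.cons h q)).IsHamiltonian := by
  have hsupp : (p.append (Walk.cons h q)).support = p.support ++ q.support := by
    rw [Walk.support_append, Walk.support_cons, List.tail_cons]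
  refine Walk.IsPath.isHamiltonian_of_mem ?_ fun z => ?_
  · rw [Walk.isPath_def, hsupp]
    exact hp.support_nodup.append hq.support_nodup hpq
  · rw [hsupp, List.mem_append]
    exact hcover z

section BoxProd

variable {W : Type*} {H : SimpleGraph W}

theorem Walk.support_boxProdLeft {u v : V} (p : G.Walk u v) (b : W) :
    (p.boxProdLeft (H := H) b).support = p.support.map (·, b) :=
  Walk.support_map _ _

theorem Walk.mem_support_boxProdLeft {u v : V} {p : G.Walk u v} {b : W} {z : V × W} :
    z ∈ (p.boxProdLeft (H := H) b).support ↔ z.1 ∈ p.support ∧ z.2 = b := by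
  rw [Walk.support_boxProdLeft, List.mem_map]
  constructor
  · rintro ⟨a, ha, rfl⟩
    exact ⟨ha, rfl⟩
  · rintro ⟨hz, rfl⟩
    exact ⟨z.1, hz, rfl⟩

theorem Walk.IsPath.boxProdLeft {u v : V} {p : G.Walk u v} (hp : p.IsPath) (b : W) :
    (p.boxProdLeft (H := H) b).IsPath :=
  hp.map (G.boxProdLeft H b).injective

end BoxProd

variable (G) in
def boxProdPathGraphSucc (n : ℕ) :
    G.boxProd (pathGraph n) ↪g G.boxProd (pathGraph (n + 1)) where
  toFun := Prod.map id Fin.succ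
  inj' := Function.injective_id.prodMap (Fin.succ_injective _)
  map_rel_iff' := by simp [pathGraph_adj]

def Walk.boxProdPathGraphSucc {n : ℕ} {a b : V} {i j : Fin n}
    (q : (G.boxProd (pathGraph n)).Walk (a, i) (b, j)) :
    (G.boxProd (pathGraph (n + 1))).Walk (a, i.succ) (b, j.succ) :=
  q.map (G.boxProdPathGraphSucc n).toHom

theorem Walk.support_boxProdPathGraphSucc {n : ℕ} {a b : V} {i j : Fin n}
    (q : (G.boxProd (pathGraph n)).Walk (a, i) (b, j)) :
    q.boxProdPathGraphSucc.support = q.support.map (Prod.map id Fin.succ) :=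
  Walk.support_map _ _

theorem Walk.IsPath.boxProdPathGraphSucc {n : ℕ} {a b : V} {i j : Fin n}
    {q : (G.boxProd (pathGraph n)).Walk (a, i) (b, j)} (hq : q.IsPath) :
    q.boxProdPathGraphSucc.IsPath :=
  hq.map (G.boxProdPathGraphSucc n).injective

theorem Walk.IsHamiltonian.mem_support_boxProdPathGraphSucc [DecidableEq V] {n : ℕ} {a b : V}
    {i j : Fin n} {q : (G.boxProd (pathGraph n)).Walk (a, i) (b, j)} (hq : q.IsHamiltonian)
    (z : V × Fin (n + 1)) : z ∈ q.boxProdPathGraphSucc.support ↔ z.2 ≠ 0 := by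
  rw [Walk.support_boxProdPathGraphSucc, List.mem_map]
  constructor
  · rintro ⟨w, -, rfl⟩
    exact Fin.succ_ne_zero _
  · intro hz
    obtain ⟨k, hk⟩ := Fin.exists_succ_eq.mpr hz
    exact ⟨(z.1, k), hq.mem_support _, by simp [hk]⟩

variable (G) in
def boxProdPathGraphRotate (n : ℕ) (a : Fin (n + 1)) :
    G.boxProd (pathGraph (n + 1)) →g G.boxProd (cycleGraph (n + 1)) where
  toFun := Prod.map id (· + a)
  map_rel' := by
    rintro ⟨u, i⟩ ⟨v, j⟩ (⟨huv, rfl⟩ | ⟨hij, rfl⟩)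
    · exact Or.inl ⟨huv, rfl⟩
    · refine Or.inr ⟨?_, rfl⟩
      simpa [cycleGraph_adj', add_sub_add_right_eq_sub] using pathGraph_le_cycleGraph hij

theorem bijective_boxProdPathGraphRotate (n : ℕ) (a : Fin (n + 1)) :
    Function.Bijective (G.boxProdPathGraphRotate n a) :=
  Function.bijective_id.prodMap (AddGroup.addRight_bijective a)

variable [DecidableEq V]

theorem exists_isHamiltonian_boxProd_pathGraph_zero_succ [Fintype V] (hV : 3 ≤ Fintype.card V)
    (hG : HamConn G) {n : ℕ}
    (ih : ∀ (x y : V) (b : Fin (n + 1)), (x, 0) ≠ (y, b) →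
      ∃ p : (G.boxProd (pathGraph (n + 1))).Walk (x, 0) (y, b), p.IsHamiltonian)
    (x y : V) (j : Fin (n + 1)) :
    ∃ p : (G.boxProd (pathGraph (n + 2))).Walk (x, 0) (y, j.succ), p.IsHamiltonian := by
  obtain ⟨e, hex, hey⟩ : ∃ e, e ≠ x ∧ e ≠ y := by
    obtain ⟨e, he, hey⟩ := (univ.erase x).exists_mem_ne
      (by rw [card_erase_of_mem (mem_univ x), card_univ]; omega) y
    exact ⟨e, ne_of_mem_erase he, hey⟩
  obtain ⟨P, hP⟩ := hG x e hex.symm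
  obtain ⟨q, hq⟩ := ih e y j (by simp [hey])
  have hup : (G.boxProd (pathGraph (n + 2))).Adj (e, 0) (e, Fin.succ 0) := by
    simp [pathGraph_adj]
  refine ⟨(P.boxProdLeft (H := pathGraph (n + 2)) 0).append (.cons hup q.boxProdPathGraphSucc),
    (hP.isPath.boxProdLeft 0).isHamiltonian_append_cons hup
      hq.isPath.boxProdPathGraphSucc ?_ fun z => ?_⟩
  · intro z hz hz'
    exact (hq.mem_support_boxProdPathGraphSucc z).mp hz' (Walk.mem_support_boxProdLeft.mp hz).2
  · rw [Walk.mem_support_boxProdLeft, hq.mem_support_boxProdPathGraphSucc]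
    exact (em (z.2 = 0)).imp (fun h0 => ⟨hP.mem_support _, h0⟩) id

theorem exists_isHamiltonian_boxProd_pathGraph_zero_zero (hG : HamConn G) {n : ℕ}
    (ih : ∀ (x y : V) (b : Fin (n + 1)), (x, 0) ≠ (y, b) →
      ∃ p : (G.boxProd (pathGraph (n + 1))).Walk (x, 0) (y, b), p.IsHamiltonian)
    {x y : V} (hxy : x ≠ y) :
    ∃ p : (G.boxProd (pathGraph (n + 2))).Walk (x, 0) (y, 0), p.IsHamiltonian := by
  obtain ⟨P, hP⟩ := hG x y hxy
  cases P with
  | nil => exact absurd rfl hxy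
  | @cons _ w _ hxw P' =>
    obtain ⟨q, hq⟩ := ih x w 0 (by simp [hxw.ne])
    have hP' := (Walk.cons_isPath_iff hxw P').mp hP.isPath
    have hup : (G.boxProd (pathGraph (n + 2))).Adj (x, 0) (x, Fin.succ 0) := by
      simp [pathGraph_adj]
    have hdown : (G.boxProd (pathGraph (n + 2))).Adj (w, Fin.succ 0) (w, 0) := by
      simp [pathGraph_adj]
    have hqup := hq.mem_support_boxProdPathGraphSucc
    refine ⟨(Walk.cons hup q.boxProdPathGraphSucc).append
      (.cons hdown (P'.boxProdLeft (H := pathGraph (n + 2)) 0)),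
      Walk.IsPath.isHamiltonian_append_cons hdown ?_ (hP'.1.boxProdLeft 0) ?_ fun z => ?_⟩
    · rw [Walk.cons_isPath_iff, hqup]
      exact ⟨hq.isPath.boxProdPathGraphSucc, fun h => h rfl⟩
    · intro z hz hz'
      rw [Walk.mem_support_boxProdLeft] at hz'
      rw [Walk.support_cons, List.mem_cons] at hz
      rcases hz with rfl | hz
      · exact hP'.2 hz'.1
      · exact (hqup _).mp hz hz'.2
    · rw [Walk.support_cons, List.mem_cons, hqup, Walk.mem_support_boxProdLeft]
      have hz := hP.mem_support z.1
      rw [Walk.support_cons, List.mem_cons] at hz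
      by_cases h0 : z.2 = 0
      · exact hz.imp (fun h => Or.inl (Prod.ext h h0)) (fun h => ⟨h, h0⟩)
      · exact Or.inl (Or.inr h0)

theorem exists_isHamiltonian_boxProd_pathGraph [Fintype V] (hV : 3 ≤ Fintype.card V)
    (hG : HamConn G) (n : ℕ) (x y : V) (b : Fin (n + 1)) (hne : (x, 0) ≠ (y, b)) :
    ∃ p : (G.boxProd (pathGraph (n + 1))).Walk (x, 0) (y, b), p.IsHamiltonian := by
  induction n generalizing x y with
  | zero =>
    obtain rfl : b = 0 := Fin.fin_one_eq_zero b
    obtain ⟨P, hP⟩ := hG x y (by simpa using hne)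
    exact ⟨_, (hP.isPath.boxProdLeft 0).isHamiltonian_of_mem fun z =>
      Walk.mem_support_boxProdLeft.mpr ⟨hP.mem_support _, Fin.fin_one_eq_zero _⟩⟩
  | succ n ih =>
    cases b using Fin.cases with
    | zero => exact exists_isHamiltonian_boxProd_pathGraph_zero_zero hG ih (by simpa using hne)
    | succ j => exact exists_isHamiltonian_boxProd_pathGraph_zero_succ hV hG ih x y j

end SimpleGraph

/-- if `G` is Hamilton connected on at least 3 vertices then `G □ C_k` is
Hamilton connected for every `k ≥ 1`. -/
theorem boxProd_cycle_hamilton_connected {V : Type*} [Fintype V] [DecidableEq V]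
    (G : SimpleGraph V) (hV : 3 ≤ Fintype.card V) (hG : HamConn G) (k : ℕ) (hk : 1 ≤ k) :
    HamConn (G.boxProd (SimpleGraph.cycleGraph k)) := by
  obtain ⟨n, rfl⟩ : ∃ n, k = n + 1 := ⟨k - 1, by omega⟩
  rintro ⟨x, a⟩ ⟨y, b⟩ hne
  obtain ⟨p, hp⟩ := SimpleGraph.exists_isHamiltonian_boxProd_pathGraph hV hG n x y (b - a)
    (by simpa [Prod.ext_iff, eq_comm, sub_eq_zero] using hne)
  have hx : G.boxProdPathGraphRotate n a (x, 0) = (x, a) := by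
    simp [SimpleGraph.boxProdPathGraphRotate]
  have hy : G.boxProdPathGraphRotate n a (y, b - a) = (y, b) := by
    simp [SimpleGraph.boxProdPathGraphRotate]
  rw [← hx, ← hy]
  exact ⟨_, hp.map _ (SimpleGraph.bijective_boxProdPathGraphRotate n a)⟩
end

section
/- (Joining lemma) Let G be a graph whose vertex set is partitioned into k ≥ 2 disjoint subsets V_1,...,V_k such that: (1) G[V_i] is Hamilton connected for every i ∈ [k]; (2) every vertex in every set V_i has a neighbor in some different set V_j; and (3) there are at least three pairwise disjoint edges between every two sets V_i, V_j. Then G is Hamilton connected. -/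
open Matrix Finset

/-!
If `x` and `y` lie in different parts, a Hamilton path runs through the parts one after
another: among three disjoint edges between two parts one avoids both a prescribed vertex of
the first part and one of the second, so each part is entered and left at distinct vertices.

If `x` and `y` lie in the same part `A`, take a Hamilton path of `A` from `x` to `y` and replace
one of its edges `uv` by `u ζ₁ ⋯ ζ₂ v`, where `ζ₁, ζ₂` are neighbours of `u, v` outside `A`
joined by a Hamilton path of `G - A`. Such paths exist between outside vertices in different parts,
and between any two distinct outside vertices when there is only one other part. If no edge of
the path admitted a detour, the outside neighbours of consecutive vertices, hence of all vertices
of `A - y`, would lie in a single part (respectively, be a single vertex); three disjoint edges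
from `A` to the other parts rule this out.
-/

namespace SimpleGraph

variable {V : Type*} {G : SimpleGraph V}

def HamPathOn (G : SimpleGraph V) (S : Set V) (x y : V) : Prop :=
  ∃ p : G.Walk x y, p.IsPath ∧ ∀ v, v ∈ p.support ↔ v ∈ S

def ThreeDisjointEdges (G : SimpleGraph V) (S T : Set V) : Prop :=
  ∃ x1 x2 x3 y1 y2 y3 : V,
    x1 ∈ S ∧ x2 ∈ S ∧ x3 ∈ S ∧ y1 ∈ T ∧ y2 ∈ T ∧ y3 ∈ T ∧
    G.Adj x1 y1 ∧ G.Adj x2 y2 ∧ G.Adj x3 y3 ∧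
    x1 ≠ x2 ∧ x1 ≠ x3 ∧ x2 ≠ x3 ∧ y1 ≠ y2 ∧ y1 ≠ y3 ∧ y2 ≠ y3

namespace ThreeDisjointEdges

variable {S T : Set V}

theorem exists_adj_avoiding (h : G.ThreeDisjointEdges S T) (x y : V) :
    ∃ a ∈ S, ∃ b ∈ T, G.Adj a b ∧ a ≠ x ∧ b ≠ y := by
  obtain ⟨x1, x2, x3, y1, y2, y3, hx1, hx2, hx3, hy1, hy2, hy3, e1, e2, e3, hx12, hx13, hx23,
    hy12, hy13, hy23⟩ := h
  by_contra! H
  have h1 := H x1 hx1 y1 hy1 e1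
  have h2 := H x2 hx2 y2 hy2 e2
  have h3 := H x3 hx3 y3 hy3 e3
  by_cases hx1x : x1 = x
  · subst hx1x
    exact hy23 ((h2 hx12.symm).trans (h3 hx13.symm).symm)
  by_cases hx2x : x2 = x
  · subst hx2x
    exact hy13 ((h1 hx12).trans (h3 hx23.symm).symm)
  exact hy12 ((h1 hx1x).trans (h2 hx2x).symm)

theorem exists_two_adj_avoiding (h : G.ThreeDisjointEdges S T) (x : V) :
    ∃ a ∈ S, ∃ b ∈ T, ∃ a' ∈ S, ∃ b' ∈ T,
      G.Adj a b ∧ G.Adj a' b' ∧ a ≠ x ∧ a' ≠ x ∧ b ≠ b' := by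
  obtain ⟨x1, x2, x3, y1, y2, y3, hx1, hx2, hx3, hy1, hy2, hy3, e1, e2, e3, hx12, hx13, hx23,
    hy12, hy13, hy23⟩ := h
  by_cases h1 : x1 = x
  · exact ⟨x2, hx2, y2, hy2, x3, hx3, y3, hy3, e2, e3, by grind, by grind, hy23⟩
  by_cases h2 : x2 = x
  · exact ⟨x1, hx1, y1, hy1, x3, hx3, y3, hy3, e1, e3, h1, by grind, hy13⟩
  exact ⟨x1, hx1, y1, hy1, x2, hx2, y2, hy2, e1, e2, h1, h2, hy12⟩

end ThreeDisjointEdges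

namespace Walk

theorem exists_split_of_mem_darts {a b : V} (q : G.Walk a b) {d : G.Dart} (hd : d ∈ q.darts) :
    ∃ (q₁ : G.Walk a d.fst) (q₂ : G.Walk d.snd b), q.support = q₁.support ++ q₂.support := by
  induction q with
  | nil => simp at hd
  | cons h p ih =>
    rcases List.mem_cons.1 (darts_cons h p ▸ hd) with rfl | hd
    · exact ⟨nil, p, by simp⟩
    · obtain ⟨q₁, q₂, hq⟩ := ih hd
      exact ⟨cons h q₁, q₂, by simp [hq]⟩

theorem eq_of_forall_dart_eq {β : Type*} {N : V → Set β} {a b : V} (q : G.Walk a b)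
    (hN : ∀ v ∈ q.support, (N v).Nonempty)
    (hq : ∀ d ∈ q.darts, ∀ z ∈ N d.fst, ∀ w ∈ N d.snd, z = w) :
    ∀ u ∈ q.support, u ≠ b → ∀ z ∈ N u, ∀ w ∈ N b, z = w := by
  induction q with
  | nil => simp
  | @cons a c b h p ih =>
    have hfirst := hq ⟨(a, c), h⟩ (by simp)
    have ih := ih (fun v hv => hN v (by simp [hv])) (fun d hd => hq d (by simp [hd]))
    intro u hu hub z hz w hw
    rcases List.mem_cons.1 (support_cons h p ▸ hu) with rfl | hu
    · by_cases hcb : c = b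
      · subst hcb
        exact hfirst z hz w hw
      · obtain ⟨z', hz'⟩ := hN c (by simp)
        exact (hfirst z hz z' hz').trans (ih c p.start_mem_support hcb z' hz' w hw)
    · exact ih u hu hub z hz w hw

end Walk

theorem Walk.IsPath.hamPathOn {x y : V} {p : G.Walk x y} (hp : p.IsPath) :
    G.HamPathOn {v | v ∈ p.support} x y :=
  ⟨p, hp, fun _ => Iff.rfl⟩

theorem _root_.HamConn.hamPathOn [DecidableEq V] {S : Set V} (hS : HamConn (G.induce S)) {x y : V}
    (hx : x ∈ S) (hy : y ∈ S) (hxy : x ≠ y) : G.HamPathOn S x y := by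
  obtain ⟨p, hp⟩ := hS ⟨x, hx⟩ ⟨y, hy⟩ (by simpa using hxy)
  refine ⟨p.map (Embedding.induce S).toHom, hp.isPath.map Subtype.val_injective, fun v => ?_⟩
  change v ∈ (p.map (Embedding.induce S).toHom).support ↔ v ∈ S
  rw [Walk.support_map, List.mem_map]
  exact ⟨fun ⟨u, _, hu⟩ => hu ▸ u.2, fun hv => ⟨⟨v, hv⟩, hp.mem_support _, rfl⟩⟩

namespace HamPathOn

variable {S T : Set V}

theorem append_adj {x a b y : V} (h₁ : G.HamPathOn S x a) (h₂ : G.HamPathOn T b y)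
    (hab : G.Adj a b) (hST : Disjoint S T) : G.HamPathOn (S ∪ T) x y := by
  obtain ⟨p₁, hp₁, hS⟩ := h₁
  obtain ⟨p₂, hp₂, hT⟩ := h₂
  have hsupp : (p₁.append (.cons hab p₂)).support = p₁.support ++ p₂.support := by
    rw [Walk.support_append, Walk.support_cons, List.tail_cons]
  refine ⟨p₁.append (.cons hab p₂), ?_, fun v => ?_⟩
  · rw [Walk.isPath_def, hsupp]
    refine hp₁.support_nodup.append hp₂.support_nodup fun v hv₁ hv₂ => ?_
    exact Set.disjoint_left.1 hST ((hS v).1 hv₁) ((hT v).1 hv₂)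
  · rw [hsupp, List.mem_append, hS, hT, Set.mem_union]

theorem univ_isHamiltonian [DecidableEq V] {x y : V} (h : G.HamPathOn Set.univ x y) :
    ∃ p : G.Walk x y, p.IsHamiltonian := by
  obtain ⟨p, hp, hmem⟩ := h
  exact ⟨p, hp.isHamiltonian_of_mem fun v => (hmem v).2 trivial⟩

end HamPathOn

theorem Walk.IsPath.hamPathOn_splice {x y ζ₁ ζ₂ : V} {T : Set V} {q : G.Walk x y}
    (hq : q.IsPath) {d : G.Dart} (hd : d ∈ q.darts) (h₁ : G.Adj d.fst ζ₁) (hT : G.HamPathOn T ζ₁ ζ₂)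
    (h₂ : G.Adj ζ₂ d.snd) (hqT : ∀ v ∈ q.support, v ∉ T) :
    G.HamPathOn ({v | v ∈ q.support} ∪ T) x y := by
  obtain ⟨q₁, q₂, hsplit⟩ := q.exists_split_of_mem_darts hd
  have hnd := hq.support_nodup
  rw [hsplit, List.nodup_append] at hnd
  obtain ⟨hnd₁, hnd₂, hdisj⟩ := hnd
  have hpath := ((Walk.isPath_def _).2 hnd₁).hamPathOn.append_adj hT h₁
    (Set.disjoint_left.2 fun v hv => hqT v (by simp [hsplit, show v ∈ q₁.support from hv]))
  have := hpath.append_adj ((Walk.isPath_def _).2 hnd₂).hamPathOn h₂ ?_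
  · convert this using 1
    ext v
    simp only [hsplit, List.mem_append, Set.mem_union, Set.mem_ofPred_eq]
    tauto
  · refine Set.disjoint_left.2 fun v hv hv₂ => ?_
    rcases hv with hv | hv
    · exact hdisj v hv v hv₂ rfl
    · exact hqT v (by simp [hsplit, show v ∈ q₂.support from hv₂]) hv

theorem exists_dart_detour {β : Type*} (f : V → β) {A : Set V} {x y : V} {q : G.Walk x y}
    (hqA : ∀ v, v ∈ q.support ↔ v ∈ A) (hout : ∀ v ∈ A, ∃ ζ, G.Adj v ζ ∧ ζ ∉ A)
    (hpath : ∀ ζ₁ ζ₂, ζ₁ ∉ A → ζ₂ ∉ A → f ζ₁ ≠ f ζ₂ → G.HamPathOn Aᶜ ζ₁ ζ₂)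
    (hsep : ∀ β₀, ∃ u ∈ A, u ≠ y ∧ ∃ ζ, G.Adj u ζ ∧ ζ ∉ A ∧ f ζ ≠ β₀) :
    ∃ d ∈ q.darts, ∃ ζ₁ ζ₂, G.Adj d.fst ζ₁ ∧ G.HamPathOn Aᶜ ζ₁ ζ₂ ∧ G.Adj ζ₂ d.snd := by
  by_contra! H
  have hconst := q.eq_of_forall_dart_eq (N := fun v => f '' {ζ | G.Adj v ζ ∧ ζ ∉ A})
    (fun v hv => Set.Nonempty.image f (hout v ((hqA v).1 hv))) ?_
  · obtain ⟨ξ, hξ, hξA⟩ := hout y ((hqA y).1 q.end_mem_support)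
    obtain ⟨u, hu, huy, ζ, hζ, hζA, hne⟩ := hsep (f ξ)
    exact hne (hconst u ((hqA u).2 hu) huy _ ⟨ζ, ⟨hζ, hζA⟩, rfl⟩ _ ⟨ξ, ⟨hξ, hξA⟩, rfl⟩)
  · rintro d hd _ ⟨ζ₁, ⟨h₁, hζ₁⟩, rfl⟩ _ ⟨ζ₂, ⟨h₂, hζ₂⟩, rfl⟩
    by_contra hne
    exact H d hd ζ₁ ζ₂ h₁ (hpath ζ₁ ζ₂ hζ₁ hζ₂ hne) h₂.symm

section Partition

variable [DecidableEq V] {ι : Type*} [DecidableEq ι] (c : V → ι)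
  (hfib : ∀ i, HamConn (G.induce (c ⁻¹' {i})))
  (hthree : ∀ i j, i ≠ j → G.ThreeDisjointEdges (c ⁻¹' {i}) (c ⁻¹' {j}))
include hfib hthree

theorem hamPathOn_preimage_of_ne (s : Finset ι) {x y : V} (hx : c x ∈ s) (hy : c y ∈ s)
    (hxy : c x ≠ c y) : G.HamPathOn {v | c v ∈ s} x y := by
  induction s using Finset.strongInduction generalizing x with
  | H s ih =>
  set s' := s.erase (c x)
  have hys' : c y ∈ s' := Finset.mem_erase.2 ⟨hxy.symm, hy⟩
  obtain ⟨t, hts', hrest⟩ :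
      ∃ t ∈ s', ∀ b, c b = t → b ≠ y → G.HamPathOn {v | c v ∈ s'} b y := by
    by_cases h : ∃ t ∈ s', t ≠ c y
    · obtain ⟨t, hts', hty⟩ := h
      exact ⟨t, hts', fun b hb _ =>
        ih s' (Finset.erase_ssubset hx) (hb ▸ hts') hys' (hb ▸ hty)⟩
    · push Not at h
      refine ⟨c y, hys', fun b hb hby => ?_⟩
      rw [show {v | c v ∈ s'} = c ⁻¹' {c y} from
        Set.ext fun v => ⟨h (c v), fun hv => by
          rw [Set.mem_ofPred_eq, show c v = c y from hv]; exact hys'⟩]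
      exact (hfib (c y)).hamPathOn hb rfl hby
  have htx : t ≠ c x := (Finset.mem_erase.1 hts').1
  obtain ⟨a, ha, b, hb, hab, hax, hby⟩ := (hthree (c x) t htx.symm).exists_adj_avoiding x y
  have hxs := ((hfib (c x)).hamPathOn rfl ha hax.symm).append_adj (hrest b hb hby) hab
    (Set.disjoint_left.2 fun v hv hv' => (Finset.mem_erase.1 hv').1 hv)
  convert hxs using 1
  ext v
  simp only [Set.mem_ofPred_eq, Set.mem_union, Set.mem_preimage, Set.mem_singleton_iff, s',
    Finset.mem_erase]
  grind

theorem exists_dart_detour_of_partition [Fintype ι] (hout : ∀ v, ∃ w, G.Adj v w ∧ c w ≠ c v)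
    {p : ι} {x y : V} {q : G.Walk x y} (hqA : ∀ v, v ∈ q.support ↔ v ∈ c ⁻¹' {p}) :
    ∃ d ∈ q.darts, ∃ ζ₁ ζ₂,
      G.Adj d.fst ζ₁ ∧ G.HamPathOn (c ⁻¹' {p})ᶜ ζ₁ ζ₂ ∧ G.Adj ζ₂ d.snd := by
  have hy : c y = p := (hqA y).1 q.end_mem_support
  have hout' : ∀ v ∈ c ⁻¹' {p}, ∃ ζ, G.Adj v ζ ∧ ζ ∉ c ⁻¹' {p} := fun v hv => by
    obtain ⟨w, hvw, hw⟩ := hout v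
    exact ⟨w, hvw, fun hwp => hw (hwp.trans hv.symm)⟩
  by_cases hparts : ∃ s t, s ≠ p ∧ t ≠ p ∧ s ≠ t
  · obtain ⟨s, t, hs, ht, hst⟩ := hparts
    refine exists_dart_detour c hqA hout' (fun ζ₁ ζ₂ h₁ h₂ hne => ?_) (fun β₀ => ?_)
    · convert hamPathOn_preimage_of_ne c hfib hthree (Finset.univ.erase p) (by simpa using h₁)
        (by simpa using h₂) hne using 1
      ext v
      simp
    · obtain ⟨r, hrp, hr⟩ : ∃ r, r ≠ p ∧ r ≠ β₀ := by
        by_cases hsβ : s = β₀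
        · exact ⟨t, ht, hsβ ▸ hst.symm⟩
        · exact ⟨s, hs, hsβ⟩
      obtain ⟨a, ha, b, hb, hab, hay, -⟩ := (hthree p r hrp.symm).exists_adj_avoiding y y
      exact ⟨a, ha, hay, b, hab, fun hbp => hrp (hb.symm.trans hbp), fun hbβ => hr (hb ▸ hbβ)⟩
  · push Not at hparts
    obtain ⟨ξ, -, hξ⟩ := hout y
    have hcompl : (c ⁻¹' {p})ᶜ = c ⁻¹' {c ξ} := Set.ext fun v =>
      ⟨fun hv => hparts _ _ hv (hy ▸ hξ), fun hv hvp => (hy ▸ hξ) (hv.symm.trans hvp)⟩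
    refine exists_dart_detour id hqA hout' (fun ζ₁ ζ₂ h₁ h₂ hne => ?_) (fun β₀ => ?_)
    · rw [hcompl]
      exact (hfib (c ξ)).hamPathOn (hcompl.subset h₁) (hcompl.subset h₂) hne
    · obtain ⟨a, ha, b, hb, a', ha', b', hb', hab, hab', hay, ha'y, hbb'⟩ :=
        (hthree p (c ξ) (hy ▸ hξ).symm).exists_two_adj_avoiding y
      have hout_b : ∀ {z}, z ∈ c ⁻¹' {c ξ} → z ∉ c ⁻¹' {p} := fun hz => hcompl.symm.subset hz
      by_cases hbβ : b = β₀
      · exact ⟨a', ha', ha'y, b', hab', hout_b hb', fun h => hbb' (hbβ.trans h.symm)⟩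
      · exact ⟨a, ha, hay, b, hab, hout_b hb, hbβ⟩

theorem hamConn_of_partition [Fintype ι] (hout : ∀ v, ∃ w, G.Adj v w ∧ c w ≠ c v) :
    HamConn G := by
  intro x y hxy
  by_cases hc : c x = c y
  · obtain ⟨q, hq, hqA⟩ := (hfib (c x)).hamPathOn rfl hc.symm hxy
    obtain ⟨d, hd, ζ₁, ζ₂, h₁, hT, h₂⟩ :=
      exists_dart_detour_of_partition c hfib hthree hout hqA
    have hspliced := hq.hamPathOn_splice hd h₁ hT h₂ fun v hv hvT => hvT ((hqA v).1 hv)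
    have hcover : {v | v ∈ q.support} ∪ (c ⁻¹' {c x})ᶜ = Set.univ :=
      Set.eq_univ_of_forall fun v => (em (v ∈ c ⁻¹' {c x})).imp (hqA v).2 id
    exact (hcover ▸ hspliced).univ_isHamiltonian
  · have hpath := hamPathOn_preimage_of_ne c hfib hthree Finset.univ (Finset.mem_univ _)
      (Finset.mem_univ _) hc
    simp only [Finset.mem_univ, Set.ofPred_true] at hpath
    exact hpath.univ_isHamiltonian

end Partition

end SimpleGraph

theorem joining_lemma_general {V : Type*} [DecidableEq V] (G : SimpleGraph V)
    (k : ℕ) (P : Fin k → Set V)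
    (hdisj : ∀ i j, i ≠ j → Disjoint (P i) (P j))
    (hcover : ∀ v : V, ∃ i, v ∈ P i)
    (h1 : ∀ i, HamConn (SimpleGraph.induce (P i) G))
    (h2 : ∀ i, ∀ x ∈ P i, ∃ j, j ≠ i ∧ ∃ y ∈ P j, G.Adj x y)
    (h3 : ∀ i j, i ≠ j → ∃ x1 x2 x3 y1 y2 y3 : V,
      x1 ∈ P i ∧ x2 ∈ P i ∧ x3 ∈ P i ∧ y1 ∈ P j ∧ y2 ∈ P j ∧ y3 ∈ P j ∧
      G.Adj x1 y1 ∧ G.Adj x2 y2 ∧ G.Adj x3 y3 ∧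
      x1 ≠ x2 ∧ x1 ≠ x3 ∧ x2 ≠ x3 ∧ y1 ≠ y2 ∧ y1 ≠ y3 ∧ y2 ≠ y3) :
    HamConn G := by
  choose c hc using hcover
  have hP : ∀ i, P i = c ⁻¹' {i} := fun i => Set.ext fun v =>
    ⟨fun hv => by_contra fun hne => Set.disjoint_left.1 (hdisj _ _ hne) (hc v) hv,
      fun hv => (Set.mem_singleton_iff.1 hv) ▸ hc v⟩
  refine G.hamConn_of_partition c (fun i => hP i ▸ h1 i)
    (fun i j hij => hP i ▸ hP j ▸ h3 i j hij) fun v => ?_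
  obtain ⟨j, hj, w, hw, hvw⟩ := h2 (c v) v (hc v)
  rw [hP j] at hw
  exact ⟨w, hvw, hw ▸ hj⟩

/-- Joining lemma: if the vertex set of `G` is partitioned into `k ≥ 2` sets
whose induced subgraphs are Hamilton connected, every vertex has a neighbor in another set,
and every two sets are joined by at least three pairwise disjoint edges, then `G` is
Hamilton connected. -/
theorem joining_lemma {V : Type*} [Fintype V] [DecidableEq V] (G : SimpleGraph V)
    (k : ℕ) (hk : 2 ≤ k) (P : Fin k → Set V)
    (hdisj : ∀ i j, i ≠ j → Disjoint (P i) (P j))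
    (hcover : ∀ v : V, ∃ i, v ∈ P i)
    (h1 : ∀ i, HamConn (SimpleGraph.induce (P i) G))
    (h2 : ∀ i, ∀ x ∈ P i, ∃ j, j ≠ i ∧ ∃ y ∈ P j, G.Adj x y)
    (h3 : ∀ i j, i ≠ j → ∃ x1 x2 x3 y1 y2 y3 : V,
      x1 ∈ P i ∧ x2 ∈ P i ∧ x3 ∈ P i ∧ y1 ∈ P j ∧ y2 ∈ P j ∧ y3 ∈ P j ∧
      G.Adj x1 y1 ∧ G.Adj x2 y2 ∧ G.Adj x3 y3 ∧
      x1 ≠ x2 ∧ x1 ≠ x3 ∧ x2 ≠ x3 ∧ y1 ≠ y2 ∧ y1 ≠ y3 ∧ y2 ≠ y3) :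
    HamConn G :=
  joining_lemma_general G k P hdisj hcover h1 h2 h3
end

section
/- Let q ≥ 3 be a prime power and a ∈ F_q. The subgraph H_a of H(q) induced by the matrices [[α^i, 0],[α^j·a, α^j]] for i,j ∈ {0,...,q−2}, with edges given only by row multiplications/divisions by α, is isomorphic to the toroidal grid C_{q−1} □ C_{q−1}. -/
/-! The vertex set `V_a` is the right coset `D · L_a` of the diagonal torus `D ≅ Fˣ × Fˣ`, where
`L_a = [[1, 0], [a, 1]]`, and the row scalings by `α^{±1}` are exactly the diagonal matrices
`diag(α^{±1}, 1)`, `diag(1, α^{±1})`. Right translation preserves a left Cayley graph, so `H_a` is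
the Cayley graph of `Fˣ × Fˣ` with generators `(α^{±1}, 1)`, `(1, α^{±1})`: the box product of two
copies of the Cayley graph of the cyclic group `⟨α⟩` of order `q - 1` with generators `α^{±1}`,
which is the cycle `C_{q-1}`. -/

open Matrix Finset

namespace SimpleGraph

def Iso.boxProdCongr {V V' W W' : Type*} {G : SimpleGraph V} {G' : SimpleGraph V'}
    {H : SimpleGraph W} {H' : SimpleGraph W'} (e : G ≃g G') (f : H ≃g H') :
    G.boxProd H ≃g G'.boxProd H' :=
  ⟨e.toEquiv.prodCongr f.toEquiv, by
    rintro ⟨a, b⟩ ⟨c, d⟩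
    simp [boxProd_adj, e.map_adj_iff, f.map_adj_iff]⟩

theorem cycleGraph_eq_fromRel : ∀ (n : ℕ) [NeZero n],
    cycleGraph n = fromRel fun i j : Fin n => j = i + 1
  | 1, _ => by
    ext i j
    simp [Subsingleton.elim i j]
  | n + 2, _ => by
    ext i j
    rw [fromRel_adj, cycleGraph_adj, sub_eq_iff_eq_add, sub_eq_iff_eq_add, add_comm 1 j,
      add_comm 1 i]
    constructor
    · rintro (h | h) <;> refine ⟨?_, by tauto⟩ <;> rintro rfl <;> simp at h
    · tauto

end SimpleGraph

open SimpleGraph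

section Cayley

variable {G H : Type*} [Group G] [Group H]

theorem cayley_adj (S : Set G) (x y : G) :
    (cayley S).Adj x y ↔ x ≠ y ∧ ((∃ s ∈ S, y = s * x) ∨ ∃ s ∈ S, x = s * y) :=
  fromRel_adj _ _ _

theorem cayley_pair_inv (g : G) : cayley {g, g⁻¹} = fromRel fun x y : G => y = g * x := by
  ext x y
  simp only [cayley_adj, fromRel_adj, Set.mem_insert_iff, Set.mem_singleton_iff,
    exists_eq_or_imp, exists_eq_left, eq_inv_mul_iff_mul_eq]
  grind

theorem cayley_prod_eq_boxProd (A : Set G) (B : Set H) :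
    cayley (A ×ˢ {1} ∪ {1} ×ˢ B) = (cayley A).boxProd (cayley B) := by
  ext ⟨x₁, x₂⟩ ⟨y₁, y₂⟩
  simp only [cayley_adj, boxProd_adj, Set.mem_union, Set.mem_prod, Set.mem_singleton_iff,
    Prod.exists, Prod.mk_mul_mk, Prod.mk.injEq, or_and_right, exists_or, and_assoc,
    exists_eq_left, one_mul, exists_and_left]
  grind

theorem cayley_induce_range_mul_iso (S : Set G) {φ : H →* G} (hφ : Function.Injective φ)
    (g : G) : Nonempty ((cayley S).induce (Set.range fun h => φ h * g) ≃g cayley (φ ⁻¹' S)) := by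
  set f : H → G := fun h => φ h * g
  have hf : Function.Injective f := (mul_left_injective g).comp hφ
  have hstep : ∀ x y, (∃ s ∈ S, f y = s * f x) ↔ ∃ t ∈ φ ⁻¹' S, y = t * x := fun x y => by
    constructor
    · rintro ⟨s, hs, h⟩
      have hs' : φ (y * x⁻¹) = s := by
        rw [map_mul, map_inv, mul_inv_eq_iff_eq_mul]
        exact mul_right_cancel (h.trans (mul_assoc _ _ _).symm)
      exact ⟨y * x⁻¹, by rwa [Set.mem_preimage, hs'], (inv_mul_cancel_right y x).symm⟩
    · rintro ⟨t, ht, rfl⟩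
      exact ⟨φ t, ht, by simp only [f, map_mul, mul_assoc]⟩
  refine ⟨Iso.symm ⟨Equiv.ofInjective f hf, ?_⟩⟩
  intro x y
  simp only [comap_adj, Function.Embedding.subtype_apply, Equiv.ofInjective_apply, cayley_adj,
    hstep, hf.ne_iff]

end Cayley

section Cyclic

variable {G : Type*} [Group G]

theorem pow_val_add_one {g : G} [NeZero (orderOf g)] (i : Fin (orderOf g)) :
    g ^ ((i + 1 : Fin (orderOf g)) : ℕ) = g * g ^ (i : ℕ) := by
  rw [Fin.val_add, Fin.val_one', Nat.add_mod_mod, pow_mod_orderOf, pow_succ']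

theorem cayley_pair_inv_iso_cycleGraph [Finite G] {g : G} (hg : ∀ x, x ∈ Subgroup.zpowers g) :
    Nonempty (cayley {g, g⁻¹} ≃g cycleGraph (orderOf g)) := by
  have hfin := isOfFinOrder_of_finite g
  have : NeZero (orderOf g) := ⟨hfin.orderOf_pos.ne'⟩
  let e : Fin (orderOf g) ≃ G := (finEquivZPowers hfin).trans (Equiv.subtypeUnivEquiv hg)
  have he : ∀ i, e i = g ^ (i : ℕ) := fun _ => rfl
  have hstep : ∀ i j, e j = g * e i ↔ j = i + 1 := fun i j => by
    rw [he, he, ← pow_val_add_one, ← he, ← he, e.injective.eq_iff]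
  rw [cayley_pair_inv, cycleGraph_eq_fromRel]
  exact ⟨Iso.symm ⟨e, by simp only [fromRel_adj, e.injective.ne_iff, hstep, implies_true]⟩⟩

end Cyclic

section TwoByTwo

variable {R : Type*} [CommRing R]

variable (R) in
def diagUnits : Rˣ × Rˣ →* GL (Fin 2) R where
  toFun p := ⟨!![(p.1 : R), 0; 0, p.2], !![((p.1⁻¹ : Rˣ) : R), 0; 0, (p.2⁻¹ : Rˣ)],
    by simp [Matrix.one_fin_two], by simp [Matrix.one_fin_two]⟩
  map_one' := by ext i j; fin_cases i <;> fin_cases j <;> simp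
  map_mul' p p' := by ext i j; fin_cases i <;> fin_cases j <;> simp

@[simp]
theorem coe_diagUnits (p : Rˣ × Rˣ) :
    (diagUnits R p : Matrix (Fin 2) (Fin 2) R) = !![↑p.1, 0; 0, ↑p.2] :=
  rfl

theorem diagUnits_injective : Function.Injective (diagUnits R) := by
  rintro ⟨x, y⟩ ⟨x', y'⟩ h
  have h := congrArg Units.val h
  simp only [coe_diagUnits, ← Matrix.ext_iff, Fin.forall_fin_two] at h
  simp_all [Units.ext_iff]

def lowerUnitriangular (a : R) : GL (Fin 2) R :=
  ⟨!![1, 0; a, 1], !![1, 0; -a, 1], by simp [Matrix.one_fin_two], by simp [Matrix.one_fin_two]⟩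

theorem coe_diagUnits_mul_lowerUnitriangular (p : Rˣ × Rˣ) (a : R) :
    ((diagUnits R p * lowerUnitriangular a : GL (Fin 2) R) : Matrix (Fin 2) (Fin 2) R) =
      !![(p.1 : R), 0; p.2 * a, p.2] := by
  simp [lowerUnitriangular]

theorem one_add_single_fin_two_zero (c : R) :
    1 + Matrix.single (0 : Fin 2) 0 (c - 1) = !![c, 0; 0, 1] := by
  ext i j; fin_cases i <;> fin_cases j <;> simp

theorem one_add_single_fin_two_one (c : R) :
    1 + Matrix.single (1 : Fin 2) 1 (c - 1) = !![1, 0; 0, c] := by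
  ext i j; fin_cases i <;> fin_cases j <;> simp

end TwoByTwo

theorem diagUnits_preimage_ops {F : Type*} [Field F] (c : Fˣ) :
    diagUnits F ⁻¹' ops 2 F (fun _ _ => False) c = {c, c⁻¹} ×ˢ {1} ∪ {1} ×ˢ {c, c⁻¹} := by
  ext ⟨x, y⟩
  simp only [Set.mem_preimage, ops, Set.mem_ofPred_eq, false_and, exists_false, false_or,
    Fin.exists_fin_two, coe_diagUnits, one_add_single_fin_two_zero, one_add_single_fin_two_one,
    EmbeddingLike.apply_eq_iff_eq, Matrix.vecCons_inj, ← Units.val_inv_eq_inv_val,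
    Units.val_inj, Units.val_eq_one, and_true, true_and, Set.mem_union, Set.mem_prod,
    Set.mem_insert_iff, Set.mem_singleton_iff]
  tauto

theorem setOf_pow_lower_eq_range_diagUnits_mul {F : Type*} [Field F] [Finite F] {α : Fˣ}
    (hα : ∀ x : Fˣ, x ∈ Subgroup.zpowers α) (a : F) :
    {A : GL (Fin 2) F | ∃ i j : ℕ,
        (A : Matrix (Fin 2) (Fin 2) F) = !![(α : F) ^ i, 0; (α : F) ^ j * a, (α : F) ^ j]} =
      Set.range fun p => diagUnits F p * lowerUnitriangular a := by
  have hpow : ∀ x : Fˣ, ∃ i : ℕ, α ^ i = x := fun x => mem_powers_iff_mem_zpowers.2 (hα x)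
  ext A
  constructor
  · rintro ⟨i, j, hA⟩
    exact ⟨(α ^ i, α ^ j), Units.ext (by rw [coe_diagUnits_mul_lowerUnitriangular, hA]; simp)⟩
  · rintro ⟨⟨x, y⟩, rfl⟩
    obtain ⟨⟨i, rfl⟩, ⟨j, rfl⟩⟩ := And.intro (hpow x) (hpow y)
    exact ⟨i, j, by rw [coe_diagUnits_mul_lowerUnitriangular]; simp⟩

theorem Ha_iso_torus_general (q : ℕ)
    (F : Type) [Field F] [Fintype F] (hq : Fintype.card F = q)
    (α : Fˣ) (hα : ∀ x : Fˣ, x ∈ Subgroup.zpowers α) (a : F) :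
    Nonempty
      ((SimpleGraph.induce
          {A : Matrix.GeneralLinearGroup (Fin 2) F | ∃ i j : ℕ,
            (A : Matrix (Fin 2) (Fin 2) F) =
              !![(α : F) ^ i, 0; (α : F) ^ j * a, (α : F) ^ j]}
          (cayley (ops 2 F (fun _ _ => False) (α : F)))) ≃g
        ((SimpleGraph.cycleGraph (q - 1)).boxProd (SimpleGraph.cycleGraph (q - 1)))) := by
  have hord : orderOf α = q - 1 := by
    rw [orderOf_eq_card_of_forall_mem_zpowers hα, Nat.card_units, Nat.card_eq_fintype_card, hq]
  rw [setOf_pow_lower_eq_range_diagUnits_mul hα]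
  obtain ⟨e₁⟩ := cayley_induce_range_mul_iso (ops 2 F (fun _ _ => False) (α : F))
    diagUnits_injective (lowerUnitriangular a)
  rw [diagUnits_preimage_ops, cayley_prod_eq_boxProd] at e₁
  obtain ⟨e₂⟩ := cayley_pair_inv_iso_cycleGraph hα
  rw [hord] at e₂
  exact ⟨e₁.trans (e₂.boxProdCongr e₂)⟩

/-- the subgraph `H_a` induced on
`V_a = {[[α^i,0],[α^j a, α^j]] : i,j ∈ {0,…,q−2}}` with edges given only by row
multiplications/divisions by `α` is isomorphic to the toroidal grid `C_{q−1} □ C_{q−1}`. -/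
theorem Ha_iso_torus (q : ℕ) (hq3 : 3 ≤ q)
    (F : Type) [Field F] [Fintype F] [DecidableEq F] (hq : Fintype.card F = q)
    (α : Fˣ) (hα : ∀ x : Fˣ, x ∈ Subgroup.zpowers α) (a : F) :
    Nonempty
      ((SimpleGraph.induce
          {A : Matrix.GeneralLinearGroup (Fin 2) F | ∃ i j : ℕ,
            (A : Matrix (Fin 2) (Fin 2) F) =
              !![(α : F) ^ i, 0; (α : F) ^ j * a, (α : F) ^ j]}
          (cayley (ops 2 F (fun _ _ => False) (α : F)))) ≃g
        ((SimpleGraph.cycleGraph (q - 1)).boxProd (SimpleGraph.cycleGraph (q - 1)))) :=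
  Ha_iso_torus_general q F hq α hα a
end

section
/- Let q be a prime power with q ≡ 1 (mod 4). For any two distinct vertices a, b ∈ F_q and any color c ∈ {red, blue}, the edge-colored complete graph K̄_q admits an alternating Hamilton path from a to b such that the edge of the path incident to a has color c. -/
open Finset

/-- The difference `d` is "red": an odd power of the generator `α`. -/
def IsRed {F : Type} [Field F] (α : Fˣ) (d : F) : Prop :=
  ∃ z : ℤ, Odd z ∧ ((α ^ z : Fˣ) : F) = d

/-- The difference `d` is "blue": an even power of the generator `α`. -/
def IsBlue {F : Type} [Field F] (α : Fˣ) (d : F) : Prop :=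
  ∃ z : ℤ, Even z ∧ ((α ^ z : Fˣ) : F) = d

section Aux

variable {F : Type} [Field F] [Fintype F] [DecidableEq F]

lemma orderOf_gen (α : Fˣ) (hα : ∀ x : Fˣ, x ∈ Subgroup.zpowers α) :
    orderOf α = Fintype.card F - 1 := by
  rw [orderOf_eq_card_of_forall_mem_zpowers hα, Nat.card_eq_fintype_card, Fintype.card_units]

lemma chi_gen (hq2 : Fintype.card F % 2 = 1) (α : Fˣ)
    (hα : ∀ x : Fˣ, x ∈ Subgroup.zpowers α) :
    quadraticChar F (α : F) = -1 := by
  rw [quadraticChar_neg_one_iff_not_isSquare]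
  rintro ⟨s, hs⟩
  have hs0 : s ≠ 0 := by
    rintro rfl
    exact α.ne_zero (by simp at hs)
  obtain ⟨k, hk⟩ := Subgroup.mem_zpowers_iff.mp (hα (Units.mk0 s hs0))
  have hu : α = Units.mk0 s hs0 * Units.mk0 s hs0 := by
    ext; simpa using hs
  have h1 : α ^ (2 * k - 1) = 1 := by
    have : α ^ (2 * k) = α ^ (1 : ℤ) := by
      rw [two_mul, zpow_add, hk, zpow_one, ← hu]
    rw [zpow_sub, this, ← zpow_sub, sub_self, zpow_zero]
  have hdvd : (orderOf α : ℤ) ∣ 2 * k - 1 := orderOf_dvd_iff_zpow_eq_one.mpr h1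
  have hord : orderOf α = Fintype.card F - 1 := orderOf_gen α hα
  have hc2 : 2 ≤ Fintype.card F := Fintype.one_lt_card
  have h2 : (2 : ℤ) ∣ (orderOf α : ℤ) := by
    rw [hord]
    have : (Fintype.card F - 1) % 2 = 0 := by omega
    exact_mod_cast Int.natCast_dvd_natCast.mpr (Nat.dvd_of_mod_eq_zero this)
  obtain ⟨m, hm⟩ := h2.trans hdvd
  omega

lemma chi_zpow (hq2 : Fintype.card F % 2 = 1) (α : Fˣ)
    (hα : ∀ x : Fˣ, x ∈ Subgroup.zpowers α) (z : ℤ) :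
    quadraticChar F ((α ^ z : Fˣ) : F) = if Even z then 1 else -1 := by
  have hχα : (quadraticChar F).toUnitHom α = -1 := by
    ext
    rw [MulChar.coe_toUnitHom, chi_gen hq2 α hα]
    rfl
  have key : ((quadraticChar F).toUnitHom (α ^ z) : ℤ) =
      (((-1 : ℤˣ) ^ z : ℤˣ) : ℤ) := by
    rw [map_zpow, hχα]
  rw [← MulChar.coe_toUnitHom, key]
  have hsq : ((-1 : ℤˣ)) ^ (2 : ℤ) = 1 := by
    rw [zpow_two]; exact Int.units_mul_self _
  rcases Int.even_or_odd z with he | ho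
  · rw [if_pos he]
    obtain ⟨k, rfl⟩ := he
    rw [← two_mul, zpow_mul, hsq, one_zpow]
    rfl
  · rw [if_neg (Int.not_even_iff_odd.mpr ho)]
    obtain ⟨k, rfl⟩ := ho
    rw [zpow_add, zpow_mul, hsq, one_zpow, one_mul, zpow_one]
    rfl

lemma isRed_iff (hq2 : Fintype.card F % 2 = 1) (α : Fˣ)
    (hα : ∀ x : Fˣ, x ∈ Subgroup.zpowers α) (d : F) :
    IsRed α d ↔ d ≠ 0 ∧ quadraticChar F d = -1 := by
  constructor
  · rintro ⟨z, hz, rfl⟩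
    refine ⟨Units.ne_zero _, ?_⟩
    rw [chi_zpow hq2 α hα, if_neg (Int.not_even_iff_odd.mpr hz)]
  · rintro ⟨hd0, hχ⟩
    obtain ⟨z, hz⟩ := Subgroup.mem_zpowers_iff.mp (hα (Units.mk0 d hd0))
    have hdz : ((α ^ z : Fˣ) : F) = d := by rw [hz]; rfl
    refine ⟨z, ?_, hdz⟩
    by_contra ho
    rw [← hdz, chi_zpow hq2 α hα, if_pos (Int.not_odd_iff_even.mp ho)] at hχ
    omega

lemma isBlue_iff (hq2 : Fintype.card F % 2 = 1) (α : Fˣ)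
    (hα : ∀ x : Fˣ, x ∈ Subgroup.zpowers α) (d : F) :
    IsBlue α d ↔ d ≠ 0 ∧ quadraticChar F d = 1 := by
  constructor
  · rintro ⟨z, hz, rfl⟩
    refine ⟨Units.ne_zero _, ?_⟩
    rw [chi_zpow hq2 α hα, if_pos hz]
  · rintro ⟨hd0, hχ⟩
    obtain ⟨z, hz⟩ := Subgroup.mem_zpowers_iff.mp (hα (Units.mk0 d hd0))
    have hdz : ((α ^ z : Fˣ) : F) = d := by rw [hz]; rfl
    refine ⟨z, ?_, hdz⟩
    by_contra ho
    rw [← hdz, chi_zpow hq2 α hα, if_neg ho] at hχ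
    omega

end Aux
/-- The core construction: an alternating Hamilton path whose `i`-th edge has
quadratic character `χ(b-a)·(-1)^i`. -/
lemma pathA {F : Type} [Field F] [Fintype F] [DecidableEq F]
    (q : ℕ) (hq : Fintype.card F = q) (hq5 : 5 ≤ q)
    (γ : Fˣ) (hγ : ∀ x : Fˣ, x ∈ Subgroup.zpowers γ)
    (hχγ : quadraticChar F (γ : F) = -1)
    (hχ1 : quadraticChar F (1 - (γ : F)) = 1)
    (a b : F) (hab : a ≠ b) :
    ∃ f : ℕ → F, (∀ x : F, ∃! i : ℕ, i < q ∧ f i = x) ∧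
      f 0 = a ∧ f (q - 1) = b ∧
      ∀ i : ℕ, i + 1 < q → (f (i + 1) - f i ≠ 0 ∧
        quadraticChar F (f (i + 1) - f i)
          = quadraticChar F (b - a) * (-1) ^ i) := by
  set e : F := b - a with he_def
  have he : e ≠ 0 := sub_ne_zero.mpr (Ne.symm hab)
  have hord : orderOf γ = q - 1 := by rw [orderOf_gen γ hγ, hq]
  have hne : ∀ i : ℕ, (γ : F) ^ i ≠ 0 := fun i => pow_ne_zero _ γ.ne_zero
  have h1γ : (1 : F) - (γ : F) ≠ 0 := by
    intro h
    rw [h, quadraticChar_zero] at hχ1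
    norm_num at hχ1
  have hchipow : ∀ i : ℕ, quadraticChar F ((γ : F) ^ i) = (-1) ^ i := fun i => by
    rw [map_pow, hχγ]
  have hpow_uniq : ∀ i j : ℕ, i < q - 1 → j < q - 1 → (γ : F) ^ i = (γ : F) ^ j → i = j := by
    intro i j hi hj hij
    have hu : γ ^ i = γ ^ j := Units.ext (by
      rw [Units.val_pow_eq_pow_val, Units.val_pow_eq_pow_val]; exact hij)
    exact pow_injOn_Iio_orderOf (by rw [hord]; exact Set.mem_Iio.mpr hi)
      (by rw [hord]; exact Set.mem_Iio.mpr hj) hu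
  have hpow_exists : ∀ w : Fˣ, ∃ i : ℕ, i < q - 1 ∧ γ ^ i = w := by
    intro w
    obtain ⟨n, hn⟩ := Submonoid.mem_powers_iff w γ |>.mp
      ((isOfFinOrder_of_finite γ).mem_powers_iff_mem_zpowers.mpr (hγ w))
    refine ⟨n % orderOf γ, ?_, ?_⟩
    · rw [hord] at *
      exact Nat.mod_lt _ (by omega)
    · rw [pow_mod_orderOf, hn]
  set f : ℕ → F := fun i => if i = q - 1 then b else a + e * (1 - (γ : F) ^ i) with hf
  have hfo : ∀ i : ℕ, i ≠ q - 1 → f i = a + e * (1 - (γ : F) ^ i) := by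
    intro i h
    simp only [hf]
    rw [if_neg h]
  have hfb : f (q - 1) = b := by simp only [hf]; simp
  refine ⟨f, ?_, ?_, hfb, ?_⟩
  · -- bijectivity
    intro x
    by_cases hx : x = b
    · refine ⟨q - 1, ⟨by omega, by rw [hfb, hx]⟩, ?_⟩
      rintro j ⟨hj, hfj⟩
      by_contra hjq
      rw [hfo j hjq, hx] at hfj
      have h0 : e * (γ : F) ^ j = 0 := by linear_combination he_def - hfj
      exact hne j ((mul_eq_zero.mp h0).resolve_left he)
    · have hvne : (b - x) / e ≠ 0 := div_ne_zero (sub_ne_zero.mpr (Ne.symm hx)) he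
      obtain ⟨n, hn1, hn2⟩ := hpow_exists (Units.mk0 _ hvne)
      have hval : (γ : F) ^ n = (b - x) / e := by
        rw [← Units.val_pow_eq_pow_val, hn2]; rfl
      have hev : e * (γ : F) ^ n = b - x := by
        rw [hval]; field_simp
      refine ⟨n, ⟨by omega, ?_⟩, ?_⟩
      · rw [hfo n (by omega)]
        linear_combination he_def - hev
      · rintro j ⟨hj, hfj⟩
        have hjq : j ≠ q - 1 := by
          intro h; rw [h, hfb] at hfj; exact hx hfj.symm
        rw [hfo j hjq] at hfj
        have hcan : e * (γ : F) ^ j = e * (γ : F) ^ n := by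
          linear_combination he_def - hfj - hev
        exact hpow_uniq j n (by omega) hn1 (mul_left_cancel₀ he hcan)
  · rw [hfo 0 (by omega)]
    rw [pow_zero]; ring
  · -- differences
    intro i hi
    by_cases hi1 : i + 1 = q - 1
    · have hfi : f i = a + e * (1 - (γ : F) ^ i) := hfo i (by omega)
      have hd : f (i + 1) - f i = e * (γ : F) ^ i := by
        rw [hi1, hfb, hfi]; linear_combination -he_def
      refine ⟨by rw [hd]; exact mul_ne_zero he (hne i), ?_⟩
      rw [hd, map_mul, hchipow i]
    · have hd : f (i + 1) - f i = e * (γ : F) ^ i * (1 - (γ : F)) := by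
        rw [hfo (i + 1) hi1, hfo i (by omega)]; ring
      refine ⟨by rw [hd]; exact mul_ne_zero (mul_ne_zero he (hne i)) h1γ, ?_⟩
      rw [hd, map_mul, map_mul, hchipow i, hχ1, mul_one]
lemma neg_one_pow_or (i : ℕ) : (-1 : ℤ) ^ i = 1 ∨ (-1 : ℤ) ^ i = -1 := by
  rcases Nat.even_or_odd i with h | h
  · exact Or.inl h.neg_one_pow
  · exact Or.inr h.neg_one_pow

/-- Assemble the final statement from a path with controlled edge characters. -/
lemma assemble {F : Type} [Field F] [Fintype F] [DecidableEq F]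
    (q : ℕ) (hq : Fintype.card F = q) (hq1 : q % 2 = 1) (hq5 : 5 ≤ q)
    (α : Fˣ) (hα : ∀ x : Fˣ, x ∈ Subgroup.zpowers α)
    (a b : F) (c : Bool) (f : ℕ → F) (s : ℤ)
    (hbij : ∀ x : F, ∃! i : ℕ, i < q ∧ f i = x)
    (h0 : f 0 = a) (hlast : f (q - 1) = b)
    (hdiff : ∀ i : ℕ, i + 1 < q → (f (i + 1) - f i ≠ 0 ∧
      quadraticChar F (f (i + 1) - f i) = s * (-1) ^ i))
    (hs : s = if c then -1 else 1) :
    (∀ x : F, ∃! i : ℕ, i < q ∧ f i = x) ∧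
      f 0 = a ∧ f (q - 1) = b ∧
      (∀ i : ℕ, i + 2 < q →
        (IsRed α (f (i + 1) - f i) ↔ ¬ IsRed α (f (i + 2) - f (i + 1)))) ∧
      (c = true → IsRed α (f 1 - f 0)) ∧
      (c = false → IsBlue α (f 1 - f 0)) := by
  have hq2 : Fintype.card F % 2 = 1 := by rw [hq]; exact hq1
  have hs' : s = 1 ∨ s = -1 := by
    cases c <;> simp at hs <;> omega
  refine ⟨hbij, h0, hlast, ?_, ?_, ?_⟩
  · intro i hi
    obtain ⟨h1, hc1⟩ := hdiff i (by omega)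
    obtain ⟨h2, hc2⟩ := hdiff (i + 1) (by omega)
    rw [isRed_iff hq2 α hα, isRed_iff hq2 α hα]
    rw [pow_succ] at hc2
    have hv := neg_one_pow_or i
    simp only [h1, h2, ne_eq, not_false_iff, true_and]
    rw [hc1, hc2]
    rcases hs' with h | h <;> rcases hv with h' | h' <;> rw [h, h'] <;> norm_num
  · intro hc
    obtain ⟨h1, hc1⟩ := hdiff 0 (by omega)
    rw [pow_zero, mul_one] at hc1
    rw [isRed_iff hq2 α hα]
    exact ⟨h1, by rw [hc1, hs, hc]; rfl⟩
  · intro hc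
    obtain ⟨h1, hc1⟩ := hdiff 0 (by omega)
    rw [pow_zero, mul_one] at hc1
    rw [isBlue_iff hq2 α hα]
    exact ⟨h1, by rw [hc1, hs, hc]; rfl⟩

/-- for `q ≡ 1 (mod 4)`, any two distinct `a, b ∈ F_q` and any color `c`
(`true` = red, `false` = blue), the colored complete graph `K̄_q` has an alternating
Hamilton path from `a` to `b` whose edge incident to `a` has color `c`. -/
theorem alternating_hamilton_path (q : ℕ) (hq4 : q % 4 = 1)
    (F : Type) [Field F] [Fintype F] (hq : Fintype.card F = q)
    (α : Fˣ) (hα : ∀ x : Fˣ, x ∈ Subgroup.zpowers α)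
    (a b : F) (hab : a ≠ b) (c : Bool) :
    ∃ f : ℕ → F, (∀ x : F, ∃! i : ℕ, i < q ∧ f i = x) ∧
      f 0 = a ∧ f (q - 1) = b ∧
      (∀ i : ℕ, i + 2 < q →
        (IsRed α (f (i + 1) - f i) ↔ ¬ IsRed α (f (i + 2) - f (i + 1)))) ∧
      (c = true → IsRed α (f 1 - f 0)) ∧
      (c = false → IsBlue α (f 1 - f 0)) := by
  classical
  have hq5 : 5 ≤ q := by
    have := Fintype.one_lt_card (α := F)
    omega
  have hq2 : Fintype.card F % 2 = 1 := by rw [hq]; omega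
  have he : b - a ≠ 0 := sub_ne_zero.mpr (Ne.symm hab)
  have hχα : quadraticChar F (α : F) = -1 := chi_gen hq2 α hα
  have hm1 : quadraticChar F (-1 : F) = 1 := by
    rw [quadraticChar_one_iff_isSquare (neg_ne_zero.mpr one_ne_zero),
      FiniteField.isSquare_neg_one_iff, hq]
    omega
  have hα1 : (1 : F) - (α : F) ≠ 0 := by
    intro h
    have h1 : (α : F) = 1 := by linear_combination -h
    rw [h1, map_one] at hχα
    norm_num at hχα
  -- choose the generator γ with χ(1-γ) = 1
  obtain ⟨γ, hγ, hχγ, hχ1⟩ : ∃ γ : Fˣ, (∀ x : Fˣ, x ∈ Subgroup.zpowers γ) ∧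
      quadraticChar F (γ : F) = -1 ∧ quadraticChar F (1 - (γ : F)) = 1 := by
    rcases quadraticChar_dichotomy hα1 with h | h
    · exact ⟨α, hα, hχα, h⟩
    · have hγ' : ∀ x : Fˣ, x ∈ Subgroup.zpowers α⁻¹ := by
        intro x
        obtain ⟨k, hk⟩ := Subgroup.mem_zpowers_iff.mp (hα x)
        exact Subgroup.mem_zpowers_iff.mpr ⟨-k, by rw [inv_zpow', neg_neg, hk]⟩
      have hχγ' : quadraticChar F ((α⁻¹ : Fˣ) : F) = -1 := chi_gen hq2 α⁻¹ hγ'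
      refine ⟨α⁻¹, hγ', hχγ', ?_⟩
      have hfactor : (1 : F) - ((α⁻¹ : Fˣ) : F) =
          (-1) * ((1 - (α : F)) * ((α⁻¹ : Fˣ) : F)) := by
        have hinv : (α : F) * ((α⁻¹ : Fˣ) : F) = 1 := by
          rw [← Units.val_mul, mul_inv_cancel, Units.val_one]
        linear_combination -hinv
      rw [hfactor, map_mul, map_mul, hm1, h, hχγ']
      norm_num
  by_cases hcase : quadraticChar F (b - a) = (if c then (-1 : ℤ) else 1)
  · obtain ⟨f, hbij, h0, hlast, hdiff⟩ := pathA q hq hq5 γ hγ hχγ hχ1 a b hab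
    exact ⟨f, assemble q hq (by omega) hq5 α hα a b c f _ hbij h0 hlast hdiff hcase⟩
  · have hχe : quadraticChar F (b - a) = -(if c then (-1 : ℤ) else 1) := by
      rcases quadraticChar_dichotomy he with h | h <;> cases c <;>
        simp_all
    obtain ⟨g, hbij, h0, hlast, hdiff⟩ := pathA q hq hq5 γ hγ hχγ hχ1 b a (Ne.symm hab)
    set f : ℕ → F := fun i => g (q - 1 - i) with hf
    have hfval : ∀ i : ℕ, f i = g (q - 1 - i) := fun i => rfl
    have hbij' : ∀ x : F, ∃! i : ℕ, i < q ∧ f i = x := by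
      intro x
      obtain ⟨j, ⟨hj, hgj⟩, hu⟩ := hbij x
      refine ⟨q - 1 - j, ⟨by omega, ?_⟩, ?_⟩
      · rw [hfval, show q - 1 - (q - 1 - j) = j by omega, hgj]
      · rintro i ⟨hi, hfi⟩
        have := hu (q - 1 - i) ⟨by omega, hfi⟩
        omega
    have hdiff' : ∀ i : ℕ, i + 1 < q → (f (i + 1) - f i ≠ 0 ∧
        quadraticChar F (f (i + 1) - f i) = (if c then (-1 : ℤ) else 1) * (-1) ^ i) := by
      intro i hi
      have e1 : q - 1 - (i + 1) = q - 2 - i := by omega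
      have e2 : q - 1 - i = (q - 2 - i) + 1 := by omega
      obtain ⟨hne, hχ⟩ := hdiff (q - 2 - i) (by omega)
      have hd : f (i + 1) - f i = -(g ((q - 2 - i) + 1) - g (q - 2 - i)) := by
        rw [hfval, hfval, e1, e2]; ring
      constructor
      · rw [hd]; exact neg_ne_zero.mpr hne
      · have hneg : f (i + 1) - f i = (-1) * (g ((q - 2 - i) + 1) - g (q - 2 - i)) := by
          rw [hd]; ring
        rw [hneg, map_mul, hm1, one_mul, hχ]
        have hab' : a - b = (-1) * (b - a) := by ring
        rw [hab', map_mul, hm1, one_mul, hχe]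
        have hpar : (-1 : ℤ) ^ (q - 2 - i) = -(-1 : ℤ) ^ i := by
          have hsum : (q - 2 - i) + i = q - 2 := by omega
          rcases Nat.even_or_odd i with hpi | hpi
          · have : Odd (q - 2 - i) := by
              rcases hpi with ⟨k, hk⟩
              exact ⟨(q - 2 - i - 1) / 2, by omega⟩
            rw [this.neg_one_pow, hpi.neg_one_pow]
          · have : Even (q - 2 - i) := by
              rcases hpi with ⟨k, hk⟩
              exact ⟨(q - 2 - i) / 2, by omega⟩
            rw [this.neg_one_pow, hpi.neg_one_pow]
            ring
          -- uses q % 4 = 1 so q - 2 is odd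
        rw [hpar]; ring
    have h0' : f 0 = a := by rw [hfval, Nat.sub_zero, hlast]
    have hlast' : f (q - 1) = b := by rw [hfval, Nat.sub_self, h0]
    exact ⟨f, assemble q hq (by omega) hq5 α hα a b c f _ hbij' h0' hlast' hdiff' rfl⟩
end

section
/- Let q be a prime power with q ≡ 1 (mod 4), α a generator of F_q^×, and define v_i = Σ_{j=0}^{i} α^j for i ∈ {0,...,q−2}. Then v_0, v_1, ..., v_{q−2} are pairwise distinct, the sequence (v_0,...,v_{q−2}) forms an alternating cycle in K̄_q, and the unique element of F_q not among the v_i is u = −(α−1)^{-1}. -/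
open Finset

/-!
Multiplying by `α - 1` and adding `1` is an affine bijection of `F_q` sending `v_i` to `α^(i+1)`
and `u` to `0`. Hence the `v_i` are distinct because `α^1, …, α^(q-1)` are, none of them is `u`,
and by counting they fill up `F_q ∖ {u}`. The edge `v_i v_(i+1)` has difference `α^(i+1)`, whose
colour is the parity of `i + 1`, well defined since the order `q - 1` of `α` is even.
-/

lemma isRed_pow_iff {F : Type} [Field F] {α : Fˣ} (hα : Even (orderOf α)) (n : ℕ) :
    IsRed α ((α : F) ^ n) ↔ Odd n := by
  refine ⟨fun ⟨z, hz, hzn⟩ => ?_, fun hn => ⟨n, by exact_mod_cast hn, by norm_cast⟩⟩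
  have hmod : z ≡ n [ZMOD orderOf α] :=
    zpow_eq_zpow_iff_modEq.mp (Units.ext (by rw [hzn]; norm_cast))
  have hdvd : (2 : ℤ) ∣ n - z :=
    (Int.natCast_dvd_natCast.mpr (even_iff_two_dvd.mp hα)).trans hmod.dvd
  have hodd : Odd (n : ℤ) := by simpa using hz.add_even (even_iff_two_dvd.mpr hdvd)
  exact_mod_cast hodd

section GeomSum

variable {K : Type*} [Field K] {a : K}

lemma geom_sum_succ_injOn_Iio_orderOf (ha : a ≠ 1) :
    (Set.Iio (orderOf a)).InjOn (fun i => ∑ t ∈ range (i + 1), a ^ t) := by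
  intro i hi j hj hij
  have ha0 : a ≠ 0 := by
    rintro rfl
    simp at hi
  have hpow : a ^ (i + 1) = a ^ (j + 1) := by
    simpa [geom_sum_mul] using congrArg (· * (a - 1)) hij
  exact pow_injOn_Iio_orderOf hi hj (mul_right_cancel₀ ha0 (by simpa [pow_succ] using hpow))

lemma geom_sum_ne_neg_inv_sub_one (ha : a ≠ 1) (ha0 : a ≠ 0) (n : ℕ) :
    ∑ t ∈ range n, a ^ t ≠ -(a - 1)⁻¹ := by
  intro h
  have hgeom := geom_sum_mul a n
  rw [h, neg_mul, inv_mul_cancel₀ (sub_ne_zero.mpr ha)] at hgeom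
  exact pow_ne_zero n ha0 (by linear_combination -hgeom)

end GeomSum

lemma forall_ne_iff_eq_of_injOn {α : Type*} [Fintype α] {f : ℕ → α} {n : ℕ}
    {u : α} (hf : (Set.Iio n).InjOn f) (hu : ∀ i < n, f i ≠ u) (hn : n + 1 = Fintype.card α)
    (x : α) : (∀ i < n, f i ≠ x) ↔ x = u := by
  classical
  have hcard : #((range n).image f) = n :=
    (card_image_of_injOn (by rwa [coe_range])).trans (card_range n)
  have himage : (range n).image f = univ.erase u := by
    refine eq_of_subset_of_card_le (fun y hy => ?_) ?_
    · obtain ⟨i, hi, rfl⟩ := mem_image.mp hy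
      exact mem_erase.mpr ⟨hu i (mem_range.mp hi), mem_univ _⟩
    · rw [card_erase_of_mem (mem_univ u), card_univ, hcard]
      omega
  have hx : (∃ i < n, f i = x) ↔ x ≠ u := by simpa using congrArg (x ∈ ·) himage
  rw [← not_iff_not, ← ne_eq, ← hx]
  simp

/-- with `v_i = Σ_{j=0}^{i} α^j`, the values `v_0, …, v_{q−2}` are pairwise
distinct, form an alternating cycle in `K̄_q`, and the unique element of `F_q` missing from
the cycle is `u = −(α−1)⁻¹`. -/
theorem alternating_cycle (q : ℕ) (hq4 : q % 4 = 1)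
    (F : Type) [Field F] [Fintype F] (hq : Fintype.card F = q)
    (α : Fˣ) (hα : ∀ x : Fˣ, x ∈ Subgroup.zpowers α) :
    (∀ i j : ℕ, i < q - 1 → j < q - 1 →
      (∑ t ∈ Finset.range (i + 1), (α : F) ^ t) =
        (∑ t ∈ Finset.range (j + 1), (α : F) ^ t) → i = j) ∧
    (∀ i : ℕ,
      (IsRed α ((∑ t ∈ Finset.range (i + 2), (α : F) ^ t) -
          (∑ t ∈ Finset.range (i + 1), (α : F) ^ t)) ↔
        ¬ IsRed α ((∑ t ∈ Finset.range (i + 3), (α : F) ^ t) -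
          (∑ t ∈ Finset.range (i + 2), (α : F) ^ t)))) ∧
    (∀ x : F, (∀ i : ℕ, i < q - 1 → (∑ t ∈ Finset.range (i + 1), (α : F) ^ t) ≠ x) ↔
      x = -((α : F) - 1)⁻¹) := by
  have hord : orderOf (α : F) = q - 1 := by
    rw [orderOf_units, orderOf_eq_card_of_forall_mem_zpowers hα, Nat.card_units,
      Nat.card_eq_fintype_card, hq]
  have hα1 : (α : F) ≠ 1 := fun h => by
    rw [h, orderOf_one] at hord
    omega
  have hinj := geom_sum_succ_injOn_Iio_orderOf hα1
  rw [hord] at hinj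
  refine ⟨fun _ _ hi hj => hinj hi hj, fun i => ?_, fun x => ?_⟩
  · have heven : Even (orderOf α) := by
      rw [← orderOf_units, hord, Nat.even_iff]
      omega
    rw [sum_range_succ_sub_sum, sum_range_succ_sub_sum, isRed_pow_iff heven, isRed_pow_iff heven]
    exact iff_not_comm.mp Nat.odd_add_one
  · exact forall_ne_iff_eq_of_injOn hinj
      (fun i _ => geom_sum_ne_neg_inv_sub_one hα1 α.ne_zero _) (by omega) x
end

section
/- Let q ≥ 3 be a prime power with q odd. Color a vertex [[α^i,0],[α^j a, α^j]] of H(q) blue if i+j is even and red if i+j is odd. Then for any a ≠ b in F_q, every edge of H(q) between V_a and V_b joins two vertices of the same color; moreover, if q ≡ 1 (mod 4), all edges between V_a and V_b have the same color. -/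
/-! Since `α` generates the cyclic group `Fˣ` of even order `q - 1`, `α ^ n` is a square exactly
when `n` is even, so the colour of `[[α^i, 0], [α^j a, α^j]]` records whether `α ^ (i + j)` is a
square. Of the generators, only the transvections `[[1, 0], [±1, 1]]` can change the parameter
`a`; they fix `α ^ i` and `α ^ j` and force `α ^ j (b - a) = ±α ^ i`. Hence an edge between
`V_a` and `V_b` preserves `α ^ (i + j)`, and when `-1` is a square (`q ≡ 1 mod 4`) the relation
shows that `α ^ (i + j)` and `b - a` differ by a nonzero square factor, so the colour of every
such edge is that of `b - a`. -/

open Matrix Finset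

/-- The transition graph `T' = ([2], {(1,2)})`. -/
def Tonly12 : Fin 2 → Fin 2 → Prop := fun i j => i = 0 ∧ j = 1

/-- The matrix `[[α^i, 0], [α^j·a, α^j]]`. -/
def vmat {F : Type} [Field F] (α : F) (i j : ℕ) (a : F) : Matrix (Fin 2) (Fin 2) F :=
  !![α ^ i, 0; α ^ j * a, α ^ j]

section Squares

variable {F : Type*} [Field F]

theorem isSquare_sq_mul_iff {u : F} (hu : u ≠ 0) (x : F) : IsSquare (u ^ 2 * x) ↔ IsSquare x := by
  refine ⟨fun h => ?_, (IsSquare.sq u).mul⟩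
  have hx : x = u⁻¹ ^ 2 * (u ^ 2 * x) := by field_simp
  exact hx ▸ (IsSquare.sq _).mul h

theorem isSquare_iff_of_pow_mul_eq (hneg : IsSquare (-1 : F))
    {α c x : F} (hα : α ≠ 0) (hc : c ^ 2 = 1) {i j : ℕ} (h : α ^ j * x = c * α ^ i) :
    IsSquare x ↔ IsSquare (α ^ (i + j)) := by
  obtain ⟨r, rfl⟩ : IsSquare c := by
    rcases sq_eq_one_iff.mp hc with rfl | rfl
    exacts [IsSquare.one, hneg]
  have hr : r ≠ 0 := by rintro rfl; simp at hc
  have hx : x = (r / α ^ j) ^ 2 * α ^ (i + j) := by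
    field_simp
    linear_combination α ^ j * h
  rw [hx, isSquare_sq_mul_iff (div_ne_zero hr (pow_ne_zero j hα))]

theorem FiniteField.not_isSquare_of_forall_mem_zpowers [Finite F] (hF : ringChar F ≠ 2)
    {α : Fˣ} (hα : ∀ x : Fˣ, x ∈ Subgroup.zpowers α) : ¬IsSquare (α : F) := by
  intro hsq
  obtain ⟨x, hx⟩ := FiniteField.exists_nonsquare hF
  have hx0 : x ≠ 0 := by rintro rfl; exact hx ⟨0, by simp⟩
  obtain ⟨z, hz⟩ := Subgroup.mem_zpowers_iff.mp (hα (Units.mk0 x hx0))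
  have hαz : (α : F) ^ z = x := by rw [← Units.val_zpow_eq_zpow_val, hz, Units.val_mk0]
  exact hx (hαz ▸ hsq.zpow z)

theorem FiniteField.isSquare_pow_iff_even [Finite F] (hF : ringChar F ≠ 2)
    {α : Fˣ} (hα : ∀ x : Fˣ, x ∈ Subgroup.zpowers α) (n : ℕ) :
    IsSquare ((α : F) ^ n) ↔ Even n := by
  refine ⟨fun h => ?_, fun hn => hn.isSquare_pow _⟩
  by_contra hn
  obtain ⟨m, rfl⟩ := Nat.not_even_iff_odd.mp hn
  have hα' : (α : F) = ((α : F) ^ m)⁻¹ ^ 2 * (α : F) ^ (2 * m + 1) := by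
    field_simp; ring
  exact not_isSquare_of_forall_mem_zpowers hF hα (hα' ▸ (IsSquare.sq _).mul h)

end Squares

section Edges

variable {F : Type} [Field F]

theorem ops_Tonly12_cases {α : F} {s : GL (Fin 2) F} (hs : s ∈ ops 2 F Tonly12 α) :
    (∃ c : F, c ^ 2 = 1 ∧ (s : Matrix (Fin 2) (Fin 2) F) = !![1, 0; c, 1]) ∨
      ∃ d₀ d₁ : F, (s : Matrix (Fin 2) (Fin 2) F) = !![d₀, 0; 0, d₁] := by
  rcases hs with ⟨i, j, ⟨rfl, rfl⟩, h | h⟩ | ⟨i, h | h⟩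
  · exact .inl ⟨1, one_pow 2, by rw [h]; ext i j; fin_cases i <;> fin_cases j <;> simp⟩
  · exact .inl ⟨-1, by ring, by rw [h]; ext i j; fin_cases i <;> fin_cases j <;> simp⟩
  all_goals
    refine .inr ⟨(s : Matrix (Fin 2) (Fin 2) F) 0 0, (s : Matrix (Fin 2) (Fin 2) F) 1 1,
      (eta_fin_two _).trans ?_⟩
    rw [h]
    fin_cases i <;> simp

theorem transvection_mul_vmat (α c a : F) (i j : ℕ) :
    !![1, 0; c, 1] * vmat α i j a = !![α ^ i, 0; c * α ^ i + α ^ j * a, α ^ j] := by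
  simp [vmat]

theorem diagonal_mul_vmat (α d₀ d₁ a : F) (i j : ℕ) :
    !![d₀, 0; 0, d₁] * vmat α i j a = !![d₀ * α ^ i, 0; d₁ * (α ^ j * a), d₁ * α ^ j] := by
  simp [vmat]

theorem vmat_eq_transvection_mul_vmat {α c a b : F} {i j k l : ℕ}
    (h : !![1, 0; c, 1] * vmat α i j a = vmat α k l b) :
    α ^ k = α ^ i ∧ α ^ l = α ^ j ∧ α ^ j * (b - a) = c * α ^ i := by
  rw [transvection_mul_vmat, vmat] at h
  simp only [EmbeddingLike.apply_eq_iff_eq, vecCons_inj, and_true] at h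
  obtain ⟨h00, h10, h11⟩ := h
  refine ⟨by linear_combination -h00, by linear_combination -h11, ?_⟩
  linear_combination b * h11 - h10

theorem eq_of_diagonal_mul_vmat {α d₀ d₁ a b : F} (hα : α ≠ 0) {i j k l : ℕ}
    (h : !![d₀, 0; 0, d₁] * vmat α i j a = vmat α k l b) : a = b := by
  rw [diagonal_mul_vmat, vmat] at h
  simp only [EmbeddingLike.apply_eq_iff_eq, vecCons_inj, and_true] at h
  obtain ⟨-, h10, h11⟩ := h
  exact mul_left_cancel₀ (pow_ne_zero l hα) (by linear_combination h10 - a * h11)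

theorem vmat_step_of_mem_ops {α a b : F} (hα : α ≠ 0) (hab : a ≠ b) {i j k l : ℕ}
    {s A B : GL (Fin 2) F} (hs : s ∈ ops 2 F Tonly12 α)
    (hA : (A : Matrix (Fin 2) (Fin 2) F) = vmat α i j a)
    (hB : (B : Matrix (Fin 2) (Fin 2) F) = vmat α k l b) (h : B = s * A) :
    α ^ k = α ^ i ∧ α ^ l = α ^ j ∧ ∃ c : F, c ^ 2 = 1 ∧ α ^ j * (b - a) = c * α ^ i := by
  have hmul : (s : Matrix (Fin 2) (Fin 2) F) * vmat α i j a = vmat α k l b := by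
    rw [← hA, ← hB, h, Units.val_mul]
  rcases ops_Tonly12_cases hs with ⟨c, hc, hs⟩ | ⟨d₀, d₁, hs⟩ <;> rw [hs] at hmul
  · obtain ⟨hk, hl, hc'⟩ := vmat_eq_transvection_mul_vmat hmul
    exact ⟨hk, hl, c, hc, hc'⟩
  · exact absurd (eq_of_diagonal_mul_vmat hα hmul) hab

theorem vmat_step_of_adj {α a b : F} (hα : α ≠ 0) (hab : a ≠ b) {i j k l : ℕ}
    {A B : GL (Fin 2) F} (hA : (A : Matrix (Fin 2) (Fin 2) F) = vmat α i j a)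
    (hB : (B : Matrix (Fin 2) (Fin 2) F) = vmat α k l b)
    (hadj : (cayley (ops 2 F Tonly12 α)).Adj A B) :
    α ^ k = α ^ i ∧ α ^ l = α ^ j ∧ ∃ c : F, c ^ 2 = 1 ∧ α ^ j * (b - a) = c * α ^ i := by
  rw [cayley, SimpleGraph.fromRel_adj] at hadj
  obtain ⟨-, ⟨s, hs, h⟩ | ⟨s, hs, h⟩⟩ := hadj
  · exact vmat_step_of_mem_ops hα hab hs hA hB h
  · obtain ⟨hk, hl, c, hc, h⟩ := vmat_step_of_mem_ops hα hab.symm hs hB hA h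
    refine ⟨hk.symm, hl.symm, -c, by rw [neg_sq, hc], ?_⟩
    linear_combination -h + (b - a) * hl + c * hk

end Edges

theorem vertex_coloring_general (q : ℕ) (hodd : Odd q)
    (F : Type) [Field F] [Fintype F] (hq : Fintype.card F = q)
    (α : Fˣ) (hα : ∀ x : Fˣ, x ∈ Subgroup.zpowers α) (a b : F) (hab : a ≠ b) :
    (∀ (i j k l : ℕ) (A B : Matrix.GeneralLinearGroup (Fin 2) F),
      (A : Matrix (Fin 2) (Fin 2) F) = vmat (α : F) i j a →
      (B : Matrix (Fin 2) (Fin 2) F) = vmat (α : F) k l b →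
      (cayley (ops 2 F Tonly12 (α : F))).Adj A B →
      (Even (i + j) ↔ Even (k + l))) ∧
    (q % 4 = 1 →
      ∀ (i j k l i' j' k' l' : ℕ) (A B A' B' : Matrix.GeneralLinearGroup (Fin 2) F),
        (A : Matrix (Fin 2) (Fin 2) F) = vmat (α : F) i j a →
        (B : Matrix (Fin 2) (Fin 2) F) = vmat (α : F) k l b →
        (cayley (ops 2 F Tonly12 (α : F))).Adj A B →
        (A' : Matrix (Fin 2) (Fin 2) F) = vmat (α : F) i' j' a →
        (B' : Matrix (Fin 2) (Fin 2) F) = vmat (α : F) k' l' b →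
        (cayley (ops 2 F Tonly12 (α : F))).Adj A' B' →
        (Even (i + j) ↔ Even (i' + j'))) := by
  have hF : ringChar F ≠ 2 := by
    rw [Ne, FiniteField.even_card_iff_char_two, hq, ← Nat.even_iff, Nat.not_even_iff_odd]
    exact hodd
  have hcolor (n : ℕ) : Even n ↔ IsSquare ((α : F) ^ n) :=
    (FiniteField.isSquare_pow_iff_even hF hα n).symm
  refine ⟨fun i j k l A B hA hB hadj => ?_,
    fun hq4 i j k l i' j' k' l' A B A' B' hA hB hadj hA' hB' hadj' => ?_⟩
  · obtain ⟨hk, hl, -⟩ := vmat_step_of_adj α.ne_zero hab hA hB hadj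
    rw [hcolor, hcolor, pow_add, pow_add, hk, hl]
  · have hneg : IsSquare (-1 : F) := FiniteField.isSquare_neg_one_iff.mpr (by omega)
    obtain ⟨-, -, c, hc, h⟩ := vmat_step_of_adj α.ne_zero hab hA hB hadj
    obtain ⟨-, -, c', hc', h'⟩ := vmat_step_of_adj α.ne_zero hab hA' hB' hadj'
    rw [hcolor, hcolor, ← isSquare_iff_of_pow_mul_eq hneg α.ne_zero hc h,
      ← isSquare_iff_of_pow_mul_eq hneg α.ne_zero hc' h']

/-- coloring a vertex `[[α^i,0],[α^j a, α^j]]` of `H(q)` blue iff `i+j` is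
even, every edge between `V_a` and `V_b` (`a ≠ b`) joins two vertices of the same color;
moreover if `q ≡ 1 (mod 4)` then all edges between `V_a` and `V_b` have the same color. -/
theorem vertex_coloring (q : ℕ) (hq3 : 3 ≤ q) (hodd : Odd q)
    (F : Type) [Field F] [Fintype F] [DecidableEq F] (hq : Fintype.card F = q)
    (α : Fˣ) (hα : ∀ x : Fˣ, x ∈ Subgroup.zpowers α) (a b : F) (hab : a ≠ b) :
    (∀ (i j k l : ℕ) (A B : Matrix.GeneralLinearGroup (Fin 2) F),
      (A : Matrix (Fin 2) (Fin 2) F) = vmat (α : F) i j a →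
      (B : Matrix (Fin 2) (Fin 2) F) = vmat (α : F) k l b →
      (cayley (ops 2 F Tonly12 (α : F))).Adj A B →
      (Even (i + j) ↔ Even (k + l))) ∧
    (q % 4 = 1 →
      ∀ (i j k l i' j' k' l' : ℕ) (A B A' B' : Matrix.GeneralLinearGroup (Fin 2) F),
        (A : Matrix (Fin 2) (Fin 2) F) = vmat (α : F) i j a →
        (B : Matrix (Fin 2) (Fin 2) F) = vmat (α : F) k l b →
        (cayley (ops 2 F Tonly12 (α : F))).Adj A B →
        (A' : Matrix (Fin 2) (Fin 2) F) = vmat (α : F) i' j' a →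
        (B' : Matrix (Fin 2) (Fin 2) F) = vmat (α : F) k' l' b →
        (cayley (ops 2 F Tonly12 (α : F))).Adj A' B' →
        (Even (i + j) ↔ Even (i' + j'))) :=
  vertex_coloring_general q hodd F hq α hα a b hab
end
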